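/- arXiv:1106.2458 — 6 statements merged into one kernel-verified Lean document; each statement's English description precedes it below -/
import Mathlib

section
/- The number of triangulations of a convex (n+2)-gon equals the Catalan number C_n = (1/(n+1)) * binomial(2n, n). -/
/-- `(a,b)` is a diagonal of the convex `n`-gon with vertices `0, …, n-1`. -/
def IsDiagonal (n a b : ℕ) : Prop :=
  a + 2 ≤ b ∧ b ≤ n - 1 ∧ ¬(a = 0 ∧ b = n - 1)

/-- Two diagonals (as ordered pairs, smaller endpoint first) cross each other. -/
def Crossing (p q : ℕ × ℕ) : Prop :=
  (p.1 < q.1 ∧ q.1 < p.2 ∧ p.2 < q.2) ∨ (q.1 < p.1 ∧ p.1 < q.2 ∧ q.2 < p.2)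

/-- A triangulation of the convex `n`-gon: a set of `n - 3` pairwise
non-crossing diagonals (equivalently, a maximal non-crossing set of diagonals). -/
def IsTriangulation (n : ℕ) (T : Finset (ℕ × ℕ)) : Prop :=
  (∀ p ∈ T, IsDiagonal n p.1 p.2) ∧
  (∀ p ∈ T, ∀ q ∈ T, ¬ Crossing p q) ∧
  T.card = n - 3

/-!
The side `(0, n + 2)` of a triangulated `(n + 3)`-gon lies in exactly one triangle
`(0, k, n + 2)`, and its apex `k` is the vertex that lies under no diagonal. Cutting along
`(0, k)` and `(k, n + 2)` splits the triangulation into triangulations of the polygons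
`0, …, k` and `k, …, n + 2`, and any two such glue back, which gives the Catalan recursion
`C (n + 1) = ∑_{i + j = n} C i * C j`. The cut pieces have the right number of diagonals
because a non-crossing set of diagonals of an `m`-gon has at most `m - 3` elements.
-/

open Finset

def NonCrossing (T : Finset (ℕ × ℕ)) : Prop :=
  ∀ p ∈ T, ∀ q ∈ T, ¬ Crossing p q

lemma crossing_comm {p q : ℕ × ℕ} : Crossing p q ↔ Crossing q p := Or.comm

lemma not_crossing_of_le {p q : ℕ × ℕ} (h : p.2 ≤ q.1) : ¬ Crossing p q := by
  unfold Crossing; omega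

lemma not_crossing_of_nested {p q : ℕ × ℕ} (h₁ : p.1 ≤ q.1) (h₂ : q.2 ≤ p.2) :
    ¬ Crossing p q := by
  unfold Crossing; omega

def shift (k : ℕ) : ℕ × ℕ ↪ ℕ × ℕ := (addRightEmbedding k).prodMap (addRightEmbedding k)

@[simp] lemma shift_apply (k : ℕ) (p : ℕ × ℕ) : shift k p = (p.1 + k, p.2 + k) := rfl

lemma crossing_shift {k : ℕ} {p q : ℕ × ℕ} :
    Crossing (shift k p) (shift k q) ↔ Crossing p q := by
  simp only [Crossing, shift_apply]; omega

namespace NonCrossing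

variable {S T : Finset (ℕ × ℕ)}

lemma mono (hT : NonCrossing T) (hST : S ⊆ T) : NonCrossing S :=
  fun p hp q hq => hT p (hST hp) q (hST hq)

lemma union (hS : NonCrossing S) (hT : NonCrossing T)
    (hST : ∀ p ∈ S, ∀ q ∈ T, ¬ Crossing p q) : NonCrossing (S ∪ T) := by
  intro p hp q hq
  rcases mem_union.1 hp with hp | hp <;> rcases mem_union.1 hq with hq | hq
  · exact hS p hp q hq
  · exact hST p hp q hq
  · exact fun h => hST q hq p hp (crossing_comm.1 h)
  · exact hT p hp q hq

lemma map_shift (hT : NonCrossing T) (k : ℕ) : NonCrossing (T.map (shift k)) := by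
  simp only [NonCrossing, forall_mem_map, crossing_shift]
  exact hT

lemma preimage_shift (hT : NonCrossing T) (k : ℕ) :
    NonCrossing (T.preimage (shift k) (shift k).injective.injOn) := fun _ hp _ hq =>
  crossing_shift.not.1 (hT _ (mem_preimage.1 hp) _ (mem_preimage.1 hq))

end NonCrossing

lemma nonCrossing_insert {T : Finset (ℕ × ℕ)} {d : ℕ × ℕ} (hT : NonCrossing T)
    (hd : ∀ p ∈ T, ¬ Crossing d p) : NonCrossing (insert d T) := by
  rw [insert_eq]
  refine NonCrossing.union ?_ hT (by simpa using hd)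
  simp only [NonCrossing, mem_singleton, forall_eq, Crossing]
  omega

-- `(a, b)` is sent to the left end of the next shorter chord ending at `b`, or to `b - 1`. Equal
-- images of chords ending at `b < b'` would make the first one cross a chord ending at `b'`.
theorem card_le_of_nonCrossing {m : ℕ} {T : Finset (ℕ × ℕ)}
    (hT : ∀ p ∈ T, p.1 + 2 ≤ p.2 ∧ p.2 < m) (hnc : NonCrossing T) : #T ≤ m - 2 := by
  let S : ℕ × ℕ → Finset ℕ := fun p =>
    insert (p.2 - 1) ((T.filter fun q => q.2 = p.2 ∧ p.1 < q.1).image Prod.fst)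
  let φ : ℕ × ℕ → ℕ := fun p => (S p).min' (insert_nonempty _ _)
  have φ_le_pred (p : ℕ × ℕ) : φ p ≤ p.2 - 1 := min'_le _ _ (mem_insert_self _ _)
  have φ_le (p q : ℕ × ℕ) (hq : q ∈ T) (h₂ : q.2 = p.2) (h₁ : p.1 < q.1) : φ p ≤ q.1 :=
    min'_le _ _ (mem_insert_of_mem (mem_image_of_mem _ (mem_filter.2 ⟨hq, h₂, h₁⟩)))
  have φ_mem (p : ℕ × ℕ) : φ p = p.2 - 1 ∨ ∃ q ∈ T, q.2 = p.2 ∧ p.1 < q.1 ∧ q.1 = φ p := by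
    have h := min'_mem (S p) (insert_nonempty _ _)
    simp only [S, mem_insert, mem_image, mem_filter, and_assoc] at h
    exact h
  have lt_φ (p : ℕ × ℕ) (hp : p ∈ T) : p.1 < φ p := by
    have := (hT p hp).1
    rcases φ_mem p with h | ⟨q, -, -, h, hq⟩ <;> omega
  have φ_ne (p q : ℕ × ℕ) (hp : p ∈ T) (hq : q ∈ T) (hlt : p.2 < q.2) : φ p ≠ φ q := by
    intro heq
    have := φ_le_pred p
    have := lt_φ p hp
    rcases φ_mem q with h | ⟨r, hr, hr₂, -, hr₁⟩
    · omega
    · exact hnc p hp r hr (Or.inl ⟨by omega, by omega, by omega⟩)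
  have φ_inj : Set.InjOn φ T := by
    intro p hp q hq heq
    rcases lt_trichotomy p.2 q.2 with h | h | h
    · exact absurd heq (φ_ne p q hp hq h)
    · rcases lt_trichotomy p.1 q.1 with h' | h' | h'
      · have := φ_le p q hq h.symm h'; have := lt_φ q hq; omega
      · exact Prod.ext h' h
      · have := φ_le q p hp h h'; have := lt_φ p hp; omega
    · exact absurd heq.symm (φ_ne q p hq hp h)
  calc #T ≤ #(Icc 1 (m - 2)) := card_le_card_of_injOn φ (fun p hp => by
          have := lt_φ p hp; have := φ_le_pred p; have := (hT p hp).2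
          simp only [coe_Icc, Set.mem_Icc]; omega) φ_inj
    _ = m - 2 := by simp

def withBase (m : ℕ) (T : Finset (ℕ × ℕ)) : Finset (ℕ × ℕ) :=
  if 3 ≤ m then insert (0, m - 1) T else T

section withBase

variable {m : ℕ} {T : Finset (ℕ × ℕ)}

lemma mem_withBase {p : ℕ × ℕ} : p ∈ withBase m T ↔ p ∈ T ∨ 3 ≤ m ∧ p = (0, m - 1) := by
  unfold withBase; split_ifs with h <;> simp [h, or_comm]

lemma base_notMem (hd : ∀ p ∈ T, IsDiagonal m p.1 p.2) : (0, m - 1) ∉ T :=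
  fun h => (hd _ h).2.2 ⟨rfl, rfl⟩

lemma chord_of_mem_withBase (hd : ∀ p ∈ T, IsDiagonal m p.1 p.2) {p : ℕ × ℕ}
    (hp : p ∈ withBase m T) : p.1 + 2 ≤ p.2 ∧ p.2 < m := by
  rcases mem_withBase.1 hp with hp | ⟨hm, rfl⟩
  · obtain ⟨h₁, h₂, -⟩ := hd p hp; omega
  · dsimp only; omega

lemma nonCrossing_withBase (hd : ∀ p ∈ T, IsDiagonal m p.1 p.2) (hnc : NonCrossing T) :
    NonCrossing (withBase m T) := by
  unfold withBase; split_ifs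
  · exact nonCrossing_insert hnc fun p hp =>
      not_crossing_of_nested (Nat.zero_le _) (hd p hp).2.1
  · exact hnc

lemma card_withBase (hd : ∀ p ∈ T, IsDiagonal m p.1 p.2) :
    #(withBase m T) = #T + if 3 ≤ m then 1 else 0 := by
  unfold withBase; split_ifs
  · exact card_insert_of_notMem (base_notMem hd)
  · rfl

lemma card_withBase_le (hd : ∀ p ∈ T, IsDiagonal m p.1 p.2) (hnc : NonCrossing T) :
    #(withBase m T) ≤ m - 2 :=
  card_le_of_nonCrossing (fun _ => chord_of_mem_withBase hd) (nonCrossing_withBase hd hnc)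

lemma erase_withBase (hd : ∀ p ∈ T, IsDiagonal m p.1 p.2) :
    (withBase m T).erase (0, m - 1) = T := by
  unfold withBase; split_ifs
  · exact erase_insert (base_notMem hd)
  · exact erase_eq_of_notMem (base_notMem hd)

end withBase

theorem card_le_of_isDiagonal {m : ℕ} {T : Finset (ℕ × ℕ)} (hd : ∀ p ∈ T, IsDiagonal m p.1 p.2)
    (hnc : NonCrossing T) : #T ≤ m - 3 := by
  have h := card_withBase_le hd hnc
  rw [card_withBase hd] at h
  split_ifs at h
  · omega
  · rcases T.eq_empty_or_nonempty with rfl | ⟨p, hp⟩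
    · simp
    · obtain ⟨h₁, h₂, -⟩ := hd p hp; omega

lemma IsTriangulation.nonCrossing {m : ℕ} {T : Finset (ℕ × ℕ)} (hT : IsTriangulation m T) :
    NonCrossing T :=
  hT.2.1

theorem IsTriangulation.mem_of_forall_not_crossing {m : ℕ} {T : Finset (ℕ × ℕ)}
    (hT : IsTriangulation m T) {d : ℕ × ℕ} (hd : IsDiagonal m d.1 d.2)
    (h : ∀ p ∈ T, ¬ Crossing d p) : d ∈ T := by
  by_contra hdT
  have := card_le_of_isDiagonal ((forall_mem_insert _ _ _).2 ⟨hd, hT.1⟩)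
    (nonCrossing_insert hT.nonCrossing h)
  rw [card_insert_of_notMem hdT, hT.2.2] at this
  obtain ⟨h₁, h₂, -⟩ := hd
  omega

-- Glues triangulations of the polygons `0, …, i + 1` and `0, …, j + 1`, the second one shifted
-- to `i + 1, …, i + j + 2`, along the triangle `(0, i + 1, i + j + 2)`.
def glue (i j : ℕ) (T₁ T₂ : Finset (ℕ × ℕ)) : Finset (ℕ × ℕ) :=
  withBase (i + 2) T₁ ∪ (withBase (j + 2) T₂).map (shift (i + 1))

def leftPart (i : ℕ) (T : Finset (ℕ × ℕ)) : Finset (ℕ × ℕ) :=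
  (T.filter (·.2 ≤ i + 1)).erase (0, i + 1)

noncomputable def rightPart (i j : ℕ) (T : Finset (ℕ × ℕ)) : Finset (ℕ × ℕ) :=
  (T.preimage (shift (i + 1)) (shift (i + 1)).injective.injOn).erase (0, j + 1)

section glue

variable {i j : ℕ} {T₁ T₂ : Finset (ℕ × ℕ)}

lemma card_glue (hd₁ : ∀ p ∈ T₁, IsDiagonal (i + 2) p.1 p.2)
    (hd₂ : ∀ p ∈ T₂, IsDiagonal (j + 2) p.1 p.2) :
    #(glue i j T₁ T₂) = #(withBase (i + 2) T₁) + #(withBase (j + 2) T₂) := by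
  rw [glue, card_union_of_disjoint, card_map]
  refine disjoint_left.2 fun p hp hp' => ?_
  obtain ⟨q, hq, rfl⟩ := mem_map.1 hp'
  have := chord_of_mem_withBase hd₁ hp
  have := chord_of_mem_withBase hd₂ hq
  simp only [shift_apply] at *
  omega

lemma IsTriangulation.card_withBase_eq_sub_two {m : ℕ} {T : Finset (ℕ × ℕ)}
    (hT : IsTriangulation m T) (hm : 2 ≤ m) : #(withBase m T) = m - 2 := by
  rw [card_withBase hT.1, hT.2.2]
  split_ifs <;> omega

theorem isTriangulation_glue (h₁ : IsTriangulation (i + 2) T₁) (h₂ : IsTriangulation (j + 2) T₂) :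
    IsTriangulation (i + j + 3) (glue i j T₁ T₂) := by
  have hL : ∀ p ∈ withBase (i + 2) T₁, p.1 + 2 ≤ p.2 ∧ p.2 < i + 2 :=
    fun _ => chord_of_mem_withBase h₁.1
  have hR : ∀ p ∈ withBase (j + 2) T₂, p.1 + 2 ≤ p.2 ∧ p.2 < j + 2 :=
    fun _ => chord_of_mem_withBase h₂.1
  refine ⟨fun p hp => ?_, ?_, ?_⟩
  · rcases mem_union.1 hp with hp | hp
    · have := hL p hp
      unfold IsDiagonal; omega
    · obtain ⟨q, hq, rfl⟩ := mem_map.1 hp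
      have := hR q hq
      simp only [IsDiagonal, shift_apply]; omega
  · refine (nonCrossing_withBase h₁.1 h₁.2.1).union
      ((nonCrossing_withBase h₂.1 h₂.2.1).map_shift _) fun p hp q hq => ?_
    obtain ⟨q, -, rfl⟩ := mem_map.1 hq
    exact not_crossing_of_le (by have := hL p hp; simp only [shift_apply]; omega)
  · rw [card_glue h₁.1 h₂.1, h₁.card_withBase_eq_sub_two (by omega),
      h₂.card_withBase_eq_sub_two (by omega)]
    omega

lemma leftPart_glue (hd₁ : ∀ p ∈ T₁, IsDiagonal (i + 2) p.1 p.2)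
    (hd₂ : ∀ p ∈ T₂, IsDiagonal (j + 2) p.1 p.2) : leftPart i (glue i j T₁ T₂) = T₁ := by
  have : (glue i j T₁ T₂).filter (·.2 ≤ i + 1) = withBase (i + 2) T₁ := by
    rw [glue, filter_union, filter_true_of_mem, filter_false_of_mem, union_empty]
    · intro p hp
      obtain ⟨q, hq, rfl⟩ := mem_map.1 hp
      have := chord_of_mem_withBase hd₂ hq
      simp only [shift_apply]; omega
    · intro p hp
      have := chord_of_mem_withBase hd₁ hp
      omega
  simpa [leftPart, this] using erase_withBase hd₁

lemma rightPart_glue (hd₁ : ∀ p ∈ T₁, IsDiagonal (i + 2) p.1 p.2)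
    (hd₂ : ∀ p ∈ T₂, IsDiagonal (j + 2) p.1 p.2) : rightPart i j (glue i j T₁ T₂) = T₂ := by
  have : (glue i j T₁ T₂).preimage (shift (i + 1)) (shift (i + 1)).injective.injOn =
      withBase (j + 2) T₂ := by
    ext q
    rw [mem_preimage, glue, mem_union, mem_map', or_iff_right]
    intro hq
    have := chord_of_mem_withBase hd₁ hq
    simp only [shift_apply] at this
    omega
  simpa [rightPart, this] using erase_withBase hd₂

end glue

-- In a triangulation of the `m`-gon, a vertex `1 ≤ k ≤ m - 2` under no diagonal is the apex of the
-- triangle on the side `(0, m - 1)`.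
def IsApex (T : Finset (ℕ × ℕ)) (k : ℕ) : Prop :=
  ∀ p ∈ T, ¬ (p.1 < k ∧ k < p.2)

section split

variable {i j : ℕ} {T : Finset (ℕ × ℕ)}

lemma IsTriangulation.left_side_mem (hT : IsTriangulation (i + j + 3) T) (hk : IsApex T (i + 1))
    (hi : 1 ≤ i) : (0, i + 1) ∈ T := by
  refine hT.mem_of_forall_not_crossing (by unfold IsDiagonal; omega) fun p hp => ?_
  have := hk p hp
  unfold Crossing; omega

lemma IsTriangulation.right_side_mem (hT : IsTriangulation (i + j + 3) T) (hk : IsApex T (i + 1))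
    (hj : 1 ≤ j) : (i + 1, i + j + 2) ∈ T := by
  refine hT.mem_of_forall_not_crossing (by unfold IsDiagonal; omega) fun p hp => ?_
  have := hk p hp
  obtain ⟨-, h₂, -⟩ := hT.1 p hp
  unfold Crossing; omega

lemma IsTriangulation.withBase_leftPart (hT : IsTriangulation (i + j + 3) T)
    (hk : IsApex T (i + 1)) : withBase (i + 2) (leftPart i T) = T.filter (·.2 ≤ i + 1) := by
  unfold withBase leftPart
  split_ifs with hi
  · exact insert_erase (mem_filter.2 ⟨hT.left_side_mem hk (by omega), le_rfl⟩)
  · refine erase_eq_of_notMem fun h => ?_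
    have := (hT.1 _ (mem_filter.1 h).1).1
    dsimp only at this; omega

lemma IsTriangulation.withBase_rightPart (hT : IsTriangulation (i + j + 3) T)
    (hk : IsApex T (i + 1)) : withBase (j + 2) (rightPart i j T) =
      T.preimage (shift (i + 1)) (shift (i + 1)).injective.injOn := by
  unfold withBase rightPart
  split_ifs with hj
  · refine insert_erase (mem_preimage.2 ?_)
    convert hT.right_side_mem hk (by omega) using 2 <;> simp only [shift_apply] <;> omega
  · refine erase_eq_of_notMem fun h => ?_
    have := (hT.1 _ (mem_preimage.1 h)).1
    simp only [shift_apply] at this; omega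

lemma IsTriangulation.glue_leftPart_rightPart (hT : IsTriangulation (i + j + 3) T)
    (hk : IsApex T (i + 1)) : glue i j (leftPart i T) (rightPart i j T) = T := by
  ext p
  rw [glue, mem_union, hT.withBase_leftPart hk, hT.withBase_rightPart hk, mem_filter, mem_map]
  constructor
  · rintro (⟨hp, -⟩ | ⟨q, hq, rfl⟩)
    · exact hp
    · exact mem_preimage.1 hq
  · intro hp
    by_cases h : p.2 ≤ i + 1
    · exact Or.inl ⟨hp, h⟩
    · have hshift : shift (i + 1) (p.1 - (i + 1), p.2 - (i + 1)) = p := by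
        have := hk p hp
        ext <;> simp only [shift_apply] <;> omega
      exact Or.inr ⟨_, mem_preimage.2 (by rwa [hshift]), hshift⟩

theorem IsTriangulation.leftPart_rightPart (hT : IsTriangulation (i + j + 3) T)
    (hk : IsApex T (i + 1)) :
    IsTriangulation (i + 2) (leftPart i T) ∧ IsTriangulation (j + 2) (rightPart i j T) := by
  have hd₁ : ∀ p ∈ leftPart i T, IsDiagonal (i + 2) p.1 p.2 := by
    rintro ⟨a, b⟩ hp
    simp only [leftPart, mem_erase, mem_filter, ne_eq, Prod.mk.injEq] at hp
    have := (hT.1 _ hp.2.1).1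
    unfold IsDiagonal; omega
  have hd₂ : ∀ p ∈ rightPart i j T, IsDiagonal (j + 2) p.1 p.2 := by
    rintro ⟨a, b⟩ hp
    simp only [rightPart, mem_erase, mem_preimage, ne_eq, Prod.mk.injEq] at hp
    obtain ⟨h₁, h₂, -⟩ := hT.1 _ hp.2
    simp only [shift_apply] at h₁ h₂
    unfold IsDiagonal; omega
  have hnc₁ : NonCrossing (leftPart i T) :=
    hT.nonCrossing.mono ((erase_subset _ _).trans (filter_subset _ _))
  have hnc₂ : NonCrossing (rightPart i j T) :=
    (hT.nonCrossing.preimage_shift _).mono (erase_subset _ _)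
  have hcard := congrArg card (hT.glue_leftPart_rightPart hk)
  have h₁ := card_withBase_le hd₁ hnc₁
  have h₂ := card_withBase_le hd₂ hnc₂
  rw [card_glue hd₁ hd₂, hT.2.2] at hcard
  rw [card_withBase hd₁] at h₁ hcard
  rw [card_withBase hd₂] at h₂ hcard
  refine ⟨⟨hd₁, hnc₁, ?_⟩, ⟨hd₂, hnc₂, ?_⟩⟩ <;> split_ifs at h₁ h₂ hcard <;> omega

end split

def apex (T : Finset (ℕ × ℕ)) : ℕ :=
  max 1 ((T.filter (·.1 = 0)).sup Prod.snd)

section apex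

variable {T : Finset (ℕ × ℕ)}

lemma le_apex {b : ℕ} (h : (0, b) ∈ T) : b ≤ apex T :=
  le_max_of_le_right <|
    Finset.le_sup (s := T.filter (·.1 = 0)) (f := Prod.snd) (mem_filter.2 ⟨h, rfl⟩)

lemma apex_eq_one_or_mem (T : Finset (ℕ × ℕ)) : apex T = 1 ∨ (0, apex T) ∈ T := by
  rcases (T.filter (·.1 = 0)).eq_empty_or_nonempty with h | h
  · left; simp [apex, h]
  · obtain ⟨⟨a, b⟩, hp, hsup⟩ := exists_mem_eq_sup _ h Prod.snd
    obtain ⟨hp, rfl : a = 0⟩ := mem_filter.1 hp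
    rw [apex, hsup]
    rcases le_total b 1 with hb | hb
    · exact Or.inl (max_eq_left hb)
    · exact Or.inr (by rwa [max_eq_right hb])

lemma isApex_apex (hnc : NonCrossing T) : IsApex T (apex T) := by
  rintro ⟨a, b⟩ hp ⟨ha, hb⟩
  dsimp only at ha hb
  rcases Nat.eq_zero_or_pos a with rfl | ha₀
  · exact absurd (le_apex hp) (by omega)
  · rcases apex_eq_one_or_mem T with h | h
    · omega
    · exact hnc _ h _ hp (Or.inl ⟨ha₀, ha, hb⟩)

lemma apex_glue {i j : ℕ} {T₁ T₂ : Finset (ℕ × ℕ)}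
    (hd₁ : ∀ p ∈ T₁, IsDiagonal (i + 2) p.1 p.2) : apex (glue i j T₁ T₂) = i + 1 := by
  refine le_antisymm (max_le (by omega) (Finset.sup_le fun p hp => ?_)) ?_
  · obtain ⟨hp, hp₀⟩ := mem_filter.1 hp
    rcases mem_union.1 hp with hp | hp
    · have := chord_of_mem_withBase hd₁ hp
      omega
    · obtain ⟨q, -, rfl⟩ := mem_map.1 hp
      simp only [shift_apply] at hp₀; omega
  · rcases Nat.eq_zero_or_pos i with rfl | hi
    · exact le_max_left _ _
    · exact le_apex (mem_union_left _ (mem_withBase.2 (Or.inr ⟨by omega, by simp⟩)))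

end apex

noncomputable def split (n : ℕ) (T : Finset (ℕ × ℕ)) :
    Σ _ : ℕ × ℕ, Finset (ℕ × ℕ) × Finset (ℕ × ℕ) :=
  ⟨(apex T - 1, n + 1 - apex T), leftPart (apex T - 1) T, rightPart (apex T - 1) (n + 1 - apex T) T⟩

lemma split_glue {i j : ℕ} {T₁ T₂ : Finset (ℕ × ℕ)} (hd₁ : ∀ p ∈ T₁, IsDiagonal (i + 2) p.1 p.2)
    (hd₂ : ∀ p ∈ T₂, IsDiagonal (j + 2) p.1 p.2) :
    split (i + j) (glue i j T₁ T₂) = ⟨(i, j), T₁, T₂⟩ := by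
  rw [split, apex_glue hd₁, show i + 1 - 1 = i by omega, show i + j + 1 - (i + 1) = j by omega,
    leftPart_glue hd₁ hd₂, rightPart_glue hd₁ hd₂]

lemma IsTriangulation.split_eq {n : ℕ} {T : Finset (ℕ × ℕ)} (hT : IsTriangulation (n + 3) T) :
    ∃ i j, i + j = n ∧ IsApex T (i + 1) ∧ split n T = ⟨(i, j), leftPart i T, rightPart i j T⟩ := by
  have h₁ : 1 ≤ apex T := le_max_left _ _
  have h₂ : apex T ≤ n + 1 := by
    rcases apex_eq_one_or_mem T with h | h
    · omega
    · obtain ⟨-, hle, hne⟩ := hT.1 _ h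
      dsimp only at hle hne; omega
  refine ⟨apex T - 1, n + 1 - apex T, by omega, ?_, rfl⟩
  rw [Nat.sub_add_cancel h₁]
  exact isApex_apex hT.nonCrossing

open Classical in
noncomputable def triangulations (m : ℕ) : Finset (Finset (ℕ × ℕ)) :=
  (range m ×ˢ range m).powerset.filter fun T => IsTriangulation m T

lemma mem_triangulations {m : ℕ} {T : Finset (ℕ × ℕ)} :
    T ∈ triangulations m ↔ IsTriangulation m T := by
  classical
  refine ⟨fun h => (mem_filter.1 h).2, fun hT => mem_filter.2 ⟨mem_powerset.2 fun p hp => ?_, hT⟩⟩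
  obtain ⟨h₁, h₂, -⟩ := hT.1 p hp
  simp only [mem_product, mem_range]; omega

noncomputable def triangulationPairs (n : ℕ) :
    Finset (Σ _ : ℕ × ℕ, Finset (ℕ × ℕ) × Finset (ℕ × ℕ)) :=
  (antidiagonal n).sigma fun ij => triangulations (ij.1 + 2) ×ˢ triangulations (ij.2 + 2)

lemma mem_triangulationPairs {n i j : ℕ} {T₁ T₂ : Finset (ℕ × ℕ)} :
    ⟨(i, j), T₁, T₂⟩ ∈ triangulationPairs n ↔
      i + j = n ∧ IsTriangulation (i + 2) T₁ ∧ IsTriangulation (j + 2) T₂ := by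
  simp [triangulationPairs, mem_triangulations]

lemma card_triangulationPairs (n : ℕ) :
    #(triangulationPairs n) =
      ∑ ij ∈ antidiagonal n, #(triangulations (ij.1 + 2)) * #(triangulations (ij.2 + 2)) := by
  simp only [triangulationPairs, card_sigma, card_product]

lemma triangulations_two : triangulations 2 = {∅} := by
  ext T
  rw [mem_triangulations, mem_singleton]
  exact ⟨fun hT => card_eq_zero.1 hT.2.2, fun h => by subst h; simp [IsTriangulation]⟩

theorem card_triangulations_add_three (n : ℕ) :
    #(triangulations (n + 3)) = #(triangulationPairs n) := by
  refine (card_nbij' (fun x => glue x.1.1 x.1.2 x.2.1 x.2.2) (split n) ?_ ?_ ?_ ?_).symm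
  · rintro ⟨⟨i, j⟩, T₁, T₂⟩ h
    obtain ⟨rfl, h₁, h₂⟩ := mem_triangulationPairs.1 h
    exact mem_triangulations.2 (isTriangulation_glue h₁ h₂)
  · intro T hT
    rw [mem_coe, mem_triangulations] at hT
    obtain ⟨i, j, rfl, hk, he⟩ := hT.split_eq
    rw [mem_coe, he]
    exact mem_triangulationPairs.2 ⟨rfl, hT.leftPart_rightPart hk⟩
  · rintro ⟨⟨i, j⟩, T₁, T₂⟩ h
    obtain ⟨rfl, h₁, h₂⟩ := mem_triangulationPairs.1 h
    exact split_glue h₁.1 h₂.1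
  · intro T hT
    rw [mem_coe, mem_triangulations] at hT
    obtain ⟨i, j, rfl, hk, he⟩ := hT.split_eq
    dsimp only
    rw [he]
    exact hT.glue_leftPart_rightPart hk

theorem card_triangulations (n : ℕ) : #(triangulations (n + 2)) = catalan n := by
  induction n using Nat.strong_induction_on with
  | _ n ih =>
    rcases n with _ | n
    · rw [triangulations_two, card_singleton, catalan_zero]
    · rw [card_triangulations_add_three, card_triangulationPairs, catalan_succ']
      refine sum_congr rfl fun ij hij => ?_
      rw [HasAntidiagonal.mem_antidiagonal] at hij
      rw [ih ij.1 (by omega), ih ij.2 (by omega)]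

/-- The number of triangulations of a convex `(n+2)`-gon equals the Catalan
number `C_n = (1/(n+1)) * binomial(2n, n)`. -/
theorem numTriangulations_eq_catalan (n : ℕ) :
    {T : Finset (ℕ × ℕ) | IsTriangulation (n + 2) T}.ncard =
      Nat.choose (2 * n) n / (n + 1) := by
  have : {T : Finset (ℕ × ℕ) | IsTriangulation (n + 2) T} = triangulations (n + 2) :=
    Set.ext fun _ => mem_triangulations.symm
  rw [this, Set.ncard_coe_finset, card_triangulations, catalan_eq_centralBinom_div,
    Nat.centralBinom_eq_two_mul_choose]
end

section
/- The number of Young diagrams (partitions) λ = (λ_1 ≥ λ_2 ≥ ...) satisfying λ_k ≤ n - k for all k ≥ 1 equals the Catalan number C_n. -/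
/-!
For `λ ∈ Y_{n+1}` let `s` be the last row `k ≤ n` on the boundary, `λ_k + k = n + 1`
(`s = 0` if there is none). Every row above it is at least `λ_s = n + 1 - s` long, so removing
the first `n + 1 - s` columns of rows `1, …, s` leaves a diagram in `Y_s`, while the rows below `s`
stay strictly off the boundary and form a diagram in `Y_{n-s}`. This is a bijection
`Y_{n+1} ≃ Σ_{s ≤ n} Y_s × Y_{n-s}`, so `|Y_n|` satisfies the Catalan recurrence.
-/

/-- The partition `f` (with `f k` the length of row `k`, `k ≥ 1`) lies in `Y_n`:
`f k ≤ n - k` for all `k ≥ 1`. -/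
def InY (n : ℕ) (f : ℕ → ℕ) : Prop :=
  f 0 = 0 ∧ (∀ k, 1 ≤ k → f (k + 1) ≤ f k) ∧ (∀ k, 1 ≤ k → f k ≤ n - k)

namespace InY

variable {n : ℕ} {f g : ℕ → ℕ}

theorem zero (n : ℕ) : InY n 0 :=
  ⟨rfl, fun _ _ => le_rfl, fun _ _ => Nat.zero_le _⟩

theorem antitone (hf : InY n f) {a b : ℕ} (ha : 1 ≤ a) (hab : a ≤ b) : f b ≤ f a := by
  induction b, hab using Nat.le_induction with
  | base => exact le_rfl
  | succ b hab ih => exact (hf.2.1 b (ha.trans hab)).trans ih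

theorem apply_le (hf : InY n f) (k : ℕ) : f k ≤ n := by
  rcases k with _ | k
  · simp [hf.1]
  · exact (hf.2.2 (k + 1) k.succ_pos).trans (Nat.sub_le n _)

theorem apply_eq_zero_of_le (hf : InY n f) {k : ℕ} (hk : n ≤ k) : f k = 0 := by
  rcases k with _ | k
  · exact hf.1
  · have := hf.2.2 (k + 1) k.succ_pos
    omega

theorem ext (hf : InY n f) (hg : InY n g) (h : ∀ k, 0 < k → k < n → f k = g k) : f = g := by
  funext k
  rcases Nat.eq_zero_or_pos k with rfl | hk
  · rw [hf.1, hg.1]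
  rcases lt_or_ge k n with hkn | hkn
  · exact h k hk hkn
  · rw [hf.apply_eq_zero_of_le hkn, hg.apply_eq_zero_of_le hkn]

end InY

abbrev Young (n : ℕ) : Type := {f : ℕ → ℕ // InY n f}

namespace Young

instance (n : ℕ) : Finite (Young n) :=
  Finite.of_injective
    (fun f (k : Fin n) => (⟨f.1 k, Nat.lt_succ_of_le (f.2.apply_le k)⟩ : Fin (n + 1)))
    fun f g hfg => Subtype.ext <| f.2.ext g.2 fun k _ hk => by
      simpa using congrFun hfg ⟨k, hk⟩

instance : Unique (Young 0) where
  default := ⟨0, InY.zero 0⟩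
  uniq f := Subtype.ext <| f.2.ext (InY.zero 0) fun _ _ h => absurd h (Nat.not_lt_zero _)

/-- Stacks `top` (shifted right by `n + 1 - s`) in rows `1, …, s` on top of `bot`. -/
def glue (n s : ℕ) (top bot : ℕ → ℕ) (k : ℕ) : ℕ :=
  if 0 < k ∧ k ≤ s then top k + (n + 1 - s) else bot (k - s)

def splitIndex (n : ℕ) (f : ℕ → ℕ) : ℕ :=
  Nat.findGreatest (fun k => f k + k = n + 1) n

/-- Rows `k > s` are sent to `0` by the truncated subtraction. -/
def topPart (n s : ℕ) (f : ℕ → ℕ) (k : ℕ) : ℕ :=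
  f k - (n + 1 - s)

def bottomPart (s : ℕ) (f : ℕ → ℕ) (k : ℕ) : ℕ :=
  if k = 0 then 0 else f (s + k)

variable {n s : ℕ} {top bot f : ℕ → ℕ}

theorem glue_of_le {k : ℕ} (hk : 0 < k) (hks : k ≤ s) :
    glue n s top bot k = top k + (n + 1 - s) :=
  if_pos ⟨hk, hks⟩

theorem glue_of_lt {k : ℕ} (hsk : s < k) : glue n s top bot k = bot (k - s) :=
  if_neg fun h => absurd h.2 (Nat.not_le.2 hsk)

theorem inY_glue (hs : s ≤ n) (htop : InY s top) (hbot : InY (n - s) bot) :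
    InY (n + 1) (glue n s top bot) := by
  refine ⟨by simp [glue, hbot.1], fun k hk => ?_, fun k hk => ?_⟩
  · rcases lt_trichotomy k s with hks | rfl | hks
    · rw [glue_of_le (by omega) hks, glue_of_le hk hks.le]
      exact Nat.add_le_add_right (htop.2.1 k hk) _
    · rw [glue_of_lt (by omega : k < k + 1), glue_of_le hk le_rfl, Nat.add_sub_cancel_left]
      have := hbot.2.2 1 le_rfl
      omega
    · rw [glue_of_lt hks, glue_of_lt (by omega), show k + 1 - s = k - s + 1 by omega]
      exact hbot.2.1 _ (by omega)
  · rcases le_or_gt k s with hks | hks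
    · rw [glue_of_le hk hks]
      have := htop.2.2 k hk
      omega
    · rw [glue_of_lt hks]
      have := hbot.2.2 (k - s) (by omega)
      omega

theorem splitIndex_glue (hs : s ≤ n) (htop : InY s top) (hbot : InY (n - s) bot) :
    splitIndex n (glue n s top bot) = s := by
  refine Nat.findGreatest_eq_iff.2 ⟨hs, fun hs0 => ?_, fun k hsk hkn => ?_⟩
  · rw [glue_of_le (Nat.pos_of_ne_zero hs0) le_rfl, htop.apply_eq_zero_of_le le_rfl]
    omega
  · rw [glue_of_lt hsk]
    have := hbot.2.2 (k - s) (by omega)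
    omega

theorem splitIndex_le : splitIndex n f ≤ n :=
  Nat.findGreatest_le n

theorem apply_splitIndex (h : splitIndex n f ≠ 0) :
    f (splitIndex n f) + splitIndex n f = n + 1 :=
  Nat.findGreatest_of_ne_zero (P := fun k => f k + k = n + 1) rfl h

theorem apply_le_of_splitIndex_lt (hf : InY (n + 1) f) {k : ℕ} (hk : splitIndex n f < k) :
    f k ≤ n - k := by
  have := hf.2.2 k (by omega)
  rcases le_or_gt k n with hkn | hkn
  · have := Nat.findGreatest_is_greatest hk hkn
    omega
  · omega

theorem inY_topPart (hf : InY (n + 1) f) :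
    InY (splitIndex n f) (topPart n (splitIndex n f) f) := by
  have hs : splitIndex n f ≤ n := splitIndex_le
  refine ⟨by simp [topPart, hf.1], fun k hk => Nat.sub_le_sub_right (hf.2.1 k hk) _,
    fun k hk => ?_⟩
  simp only [topPart]
  rcases le_or_gt k (splitIndex n f) with hks | hks
  · have := hf.2.2 k hk
    omega
  · have := apply_le_of_splitIndex_lt hf hks
    omega

theorem inY_bottomPart (hf : InY (n + 1) f) :
    InY (n - splitIndex n f) (bottomPart (splitIndex n f) f) := by
  refine ⟨rfl, fun k hk => ?_, fun k hk => ?_⟩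
  · simp only [bottomPart, if_neg (Nat.succ_ne_zero k), if_neg (Nat.pos_iff_ne_zero.1 hk)]
    exact hf.2.1 (splitIndex n f + k) (by omega)
  · simp only [bottomPart, if_neg (Nat.pos_iff_ne_zero.1 hk)]
    have := apply_le_of_splitIndex_lt hf (k := splitIndex n f + k) (by omega)
    omega

theorem glue_topPart_bottomPart (hf : InY (n + 1) f) :
    glue n (splitIndex n f) (topPart n (splitIndex n f) f) (bottomPart (splitIndex n f) f) =
      f := by
  funext k
  rcases Nat.eq_zero_or_pos k with rfl | hk
  · simp [glue, bottomPart, hf.1]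
  rcases le_or_gt k (splitIndex n f) with hks | hks
  · rw [glue_of_le hk hks, topPart]
    have hge := hf.antitone hk hks
    have htouch := apply_splitIndex (n := n) (f := f) (by omega)
    omega
  · rw [glue_of_lt hks, bottomPart, if_neg (by omega), Nat.add_sub_cancel' hks.le]

def glueSigma (n : ℕ) (x : Σ s : Fin (n + 1), Young s × Young (n - s)) : Young (n + 1) :=
  ⟨glue n x.1 x.2.1 x.2.2, inY_glue (Nat.le_of_lt_succ x.1.2) x.2.1.2 x.2.2.2⟩

theorem glueSigma_injective (n : ℕ) : Function.Injective (glueSigma n) := by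
  rintro ⟨⟨s, hs⟩, ⟨top, htop⟩, ⟨bot, hbot⟩⟩ ⟨⟨s', hs'⟩, ⟨top', htop'⟩, ⟨bot', hbot'⟩⟩ heq
  have hglue : glue n s top bot = glue n s' top' bot' := congrArg Subtype.val heq
  obtain rfl : s = s' := calc
    s = splitIndex n (glue n s top bot) := (splitIndex_glue (by omega) htop hbot).symm
    _ = s' := by rw [hglue, splitIndex_glue (by omega) htop' hbot']
  obtain rfl : top = top' := htop.ext htop' fun k hk hks => by
    simpa [glue_of_le hk hks.le] using congrFun hglue k
  obtain rfl : bot = bot' := by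
    funext k
    rcases Nat.eq_zero_or_pos k with rfl | hk
    · rw [hbot.1, hbot'.1]
    · simpa [glue_of_lt (Nat.lt_add_of_pos_right hk)] using congrFun hglue (s + k)
  rfl

theorem glueSigma_surjective (n : ℕ) : Function.Surjective (glueSigma n) := fun ⟨f, hf⟩ =>
  ⟨⟨⟨splitIndex n f, Nat.lt_succ_of_le splitIndex_le⟩, ⟨_, inY_topPart hf⟩,
    ⟨_, inY_bottomPart hf⟩⟩, Subtype.ext (glue_topPart_bottomPart hf)⟩

theorem card_succ (n : ℕ) :
    Nat.card (Young (n + 1)) =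
      ∑ s : Fin (n + 1), Nat.card (Young s) * Nat.card (Young (n - s)) := by
  rw [← Nat.card_eq_of_bijective _ ⟨glueSigma_injective n, glueSigma_surjective n⟩,
    Nat.card_sigma]
  simp only [Nat.card_prod]

theorem card_eq_catalan (n : ℕ) : Nat.card (Young n) = catalan n := by
  induction n using Nat.strong_induction_on with
  | _ n ih =>
    rcases n with _ | n
    · simp
    · rw [card_succ, catalan_succ]
      exact Finset.sum_congr rfl fun s _ => by rw [ih s (by omega), ih (n - s) (by omega)]

end Young

/-- The number of Young diagrams `λ` with `λ_k ≤ n - k` for all `k ≥ 1` equals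
the Catalan number `C_n = (1/(n+1)) * binomial(2n, n)`. -/
theorem numYoung_eq_catalan (n : ℕ) :
    {f : ℕ → ℕ | InY n f}.ncard = Nat.choose (2 * n) n / (n + 1) := by
  rw [← Nat.card_coe_set_eq, ← Nat.centralBinom_eq_two_mul_choose, ← catalan_eq_centralBinom_div]
  exact Young.card_eq_catalan n
end

section
/- If two distinct triangulations A and B of a convex n-gon are given, then the multisets of tails of their diagonals, listed in decreasing order, are different. That is, the map sending a triangulation to its decreasingly-ordered sequence of diagonal tails is injective. -/
/-- The list of tails (smaller endpoints) of the diagonals of `T`,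
sorted in decreasing order. -/
def tails (T : Finset (ℕ × ℕ)) : List ℕ :=
  (T.val.map Prod.fst).sort (· ≥ ·)

open Finset

/-- `p` is a chord, and not a side, of the convex polygon with vertex set `V`. -/
def IsChord (V : Finset ℕ) (p : ℕ × ℕ) : Prop :=
  p.1 ∈ V ∧ p.2 ∈ V ∧ (∃ w ∈ V, p.1 < w ∧ w < p.2) ∧ ∃ w ∈ V, w < p.1 ∨ p.2 < w

theorem snd_le_of_not_crossing {a b x y : ℕ} (h : ¬ Crossing (a, b) (x, y)) (hax : a < x)
    (hxb : x < b) : y ≤ b := by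
  unfold Crossing at h
  omega

/-- Induction on the number of chords: removing a shortest chord `(a, b)` together with a vertex
`w` strictly inside it leaves a non-crossing family of chords of a polygon with one vertex less,
since no chord can end at `w`. -/
theorem card_le_card_sub_three_of_isChord {V : Finset ℕ} {S : Finset (ℕ × ℕ)}
    (hS : ∀ p ∈ S, IsChord V p) (hnc : ∀ p ∈ S, ∀ q ∈ S, ¬ Crossing p q) :
    #S ≤ #V - 3 := by
  induction h : #S generalizing S V with
  | zero => exact Nat.zero_le _
  | succ k ih =>
    obtain ⟨⟨a, b⟩, hab, hmin⟩ :=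
      S.exists_min_image (fun p => p.2 - p.1) (card_pos.1 (by omega))
    obtain ⟨ha, hb, ⟨w, hw, haw, hwb⟩, o, ho, hoab⟩ := hS _ hab
    have hV : 2 < #(V.erase w) := two_lt_card.2
      ⟨a, mem_erase.2 ⟨by omega, ha⟩, b, mem_erase.2 ⟨by omega, hb⟩,
        o, mem_erase.2 ⟨by omega, ho⟩, by omega, by omega, by omega⟩
    have hS' : ∀ p ∈ S.erase (a, b), IsChord (V.erase w) p := by
      rintro ⟨x, y⟩ hp
      have hne : ¬ (x = a ∧ y = b) := fun ⟨hx, hy⟩ => ne_of_mem_erase hp (by rw [hx, hy])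
      have hpS := mem_of_mem_erase hp
      have hcross := hnc _ hab _ hpS
      have hlen : b - a ≤ y - x := hmin _ hpS
      obtain ⟨hx, hy, ⟨u, hu, hxu, huy⟩, u', hu', hu'xy⟩ := hS _ hpS
      unfold Crossing at hcross
      dsimp only at *
      refine ⟨mem_erase.2 ⟨by omega, hx⟩, mem_erase.2 ⟨by omega, hy⟩, ?_, ?_⟩
      · by_cases huw : u = w
        · by_cases hxa : x < a
          · exact ⟨a, mem_erase.2 ⟨by omega, ha⟩, hxa, by omega⟩
          · exact ⟨b, mem_erase.2 ⟨by omega, hb⟩, by omega, by omega⟩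
        · exact ⟨u, mem_erase.2 ⟨huw, hu⟩, hxu, huy⟩
      · by_cases huw : u' = w
        · by_cases hxa : a < x
          · exact ⟨a, mem_erase.2 ⟨by omega, ha⟩, Or.inl hxa⟩
          · exact ⟨b, mem_erase.2 ⟨by omega, hb⟩, Or.inr (by omega)⟩
        · exact ⟨u', mem_erase.2 ⟨huw, hu'⟩, hu'xy⟩
    have hk := ih hS' (fun p hp q hq => hnc p (mem_of_mem_erase hp) q (mem_of_mem_erase hq))
      (by rw [card_erase_of_mem hab, h, Nat.add_sub_cancel])
    rw [card_erase_of_mem hw] at hk hV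
    omega

theorem card_filter_within_le {T : Finset (ℕ × ℕ)} (hgap : ∀ p ∈ T, p.1 + 2 ≤ p.2)
    (hnc : ∀ p ∈ T, ∀ q ∈ T, ¬ Crossing p q) (u v : ℕ) :
    #{e ∈ T | u ≤ e.1 ∧ e.2 ≤ v} ≤ v - u - 1 := by
  set W := {e ∈ T | u ≤ e.1 ∧ e.2 ≤ v}
  rcases W.eq_empty_or_nonempty with hW | ⟨p, hp⟩
  · simp [hW]
  have hp' := mem_filter.1 hp
  have huv : u + 2 ≤ v := by have := hgap p hp'.1; omega
  have hchords : ∀ p ∈ W.erase (u, v), IsChord (Icc u v) p := by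
    rintro ⟨x, y⟩ hq
    have hne : ¬ (x = u ∧ y = v) := fun ⟨hx, hy⟩ => ne_of_mem_erase hq (by rw [hx, hy])
    obtain ⟨hqT, hux, hyv⟩ := mem_filter.1 (mem_of_mem_erase hq)
    have hxy := hgap _ hqT
    dsimp only at *
    refine ⟨mem_Icc.2 ⟨hux, by omega⟩, mem_Icc.2 ⟨by omega, hyv⟩,
      ⟨x + 1, mem_Icc.2 ⟨by omega, by omega⟩, by omega, by omega⟩, ?_⟩
    by_cases hux' : u < x
    · exact ⟨u, mem_Icc.2 ⟨le_rfl, by omega⟩, Or.inl hux'⟩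
    · exact ⟨v, mem_Icc.2 ⟨by omega, le_rfl⟩, Or.inr (by omega)⟩
  have hbound := card_le_card_sub_three_of_isChord hchords fun p hp q hq =>
    hnc p (mem_filter.1 (mem_of_mem_erase hp)).1 q (mem_filter.1 (mem_of_mem_erase hq)).1
  have herase : #W - 1 ≤ #(W.erase (u, v)) := pred_card_le_card_erase
  rw [Nat.card_Icc] at hbound
  omega

theorem card_filter_not_within_le {n a b : ℕ} {T : Finset (ℕ × ℕ)}
    (hd : ∀ p ∈ T, IsDiagonal n p.1 p.2) (hnc : ∀ p ∈ T, ∀ q ∈ T, ¬ Crossing p q)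
    (hab : (a, b) ∈ T) :
    #{e ∈ T | ¬ (a ≤ e.1 ∧ e.2 ≤ b)} ≤ n - (b - a - 1) - 3 := by
  obtain ⟨hab', hbn, -⟩ := hd _ hab
  have hchords : ∀ p ∈ {e ∈ T | ¬ (a ≤ e.1 ∧ e.2 ≤ b)}, IsChord (range n \ Ioo a b) p := by
    rintro ⟨x, y⟩ hp
    obtain ⟨hpT, hout⟩ := mem_filter.1 hp
    obtain ⟨hxy, hyn, hside⟩ := hd _ hpT
    have hcross := hnc _ hab _ hpT
    unfold Crossing at hcross
    dsimp only at *
    simp only [IsChord, mem_sdiff, mem_range, mem_Ioo]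
    refine ⟨⟨by omega, by omega⟩, ⟨by omega, by omega⟩, ?_, ?_⟩
    · by_cases hx : a ≤ x ∧ x < b
      · exact ⟨b, ⟨by omega, by omega⟩, by omega, by omega⟩
      · exact ⟨x + 1, ⟨by omega, by omega⟩, by omega, by omega⟩
    · by_cases hx : 0 < x
      · exact ⟨0, ⟨by omega, by omega⟩, Or.inl hx⟩
      · exact ⟨n - 1, ⟨by omega, by omega⟩, Or.inr (by omega)⟩
  have hbound := card_le_card_sub_three_of_isChord hchords fun p hp q hq =>
    hnc p (mem_filter.1 hp).1 q (mem_filter.1 hq).1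
  rwa [card_sdiff_of_subset fun x hx => mem_range.2 (by rw [mem_Ioo] at hx; omega),
    card_range, Nat.card_Ioo] at hbound

theorem card_filter_fst_eq_countP (T : Finset (ℕ × ℕ)) (q : ℕ → Prop) [DecidablePred q] :
    #{e ∈ T | q e.1} = (T.val.map Prod.fst).countP q := by
  rw [Multiset.countP_map]
  rfl

def heads (T : Finset (ℕ × ℕ)) (a : ℕ) : Finset ℕ :=
  {e ∈ T | e.1 = a}.image Prod.snd

theorem mem_heads {T : Finset (ℕ × ℕ)} {a b : ℕ} : b ∈ heads T a ↔ (a, b) ∈ T := by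
  simp [heads]

theorem card_heads (T : Finset (ℕ × ℕ)) (a : ℕ) : #(heads T a) = #{e ∈ T | e.1 = a} :=
  card_image_of_injOn fun _ hp _ hq h =>
    Prod.ext ((mem_filter.1 hp).2.trans (mem_filter.1 hq).2.symm) h

def headRank (T : Finset (ℕ × ℕ)) (a b : ℕ) : ℕ :=
  #{e ∈ T | e.1 = a ∧ e.2 ≤ b}

/-- The `j`-th smallest head at the tail `a`, computed from the multiset `t` of tails. -/
noncomputable def headOf (t : Multiset ℕ) (a j : ℕ) : ℕ :=
  sInf {x | a + 1 + j + t.countP (fun s => a < s ∧ s < x) ≤ x}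

namespace IsTriangulation

variable {n a b : ℕ} {T : Finset (ℕ × ℕ)}

theorem card_filter_within (hT : IsTriangulation n T) (hab : (a, b) ∈ T) :
    #{e ∈ T | a ≤ e.1 ∧ e.2 ≤ b} = b - a - 1 := by
  obtain ⟨hd, hnc, hcard⟩ := hT
  obtain ⟨hab', hbn, hside⟩ := hd _ hab
  have hin := card_filter_within_le (fun p hp => (hd p hp).1) hnc a b
  have hout := card_filter_not_within_le hd hnc hab
  have htotal := card_filter_add_card_filter_not (s := T) (fun e => a ≤ e.1 ∧ e.2 ≤ b)
  omega

theorem isLeast_head (hT : IsTriangulation n T) (hab : (a, b) ∈ T) :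
    IsLeast {x | a + 1 + headRank T a b + (T.val.map Prod.fst).countP (fun s => a < s ∧ s < x)
      ≤ x} b := by
  have hwithin := hT.card_filter_within hab
  obtain ⟨hd, hnc, -⟩ := hT
  have hab' := (hd _ hab).1
  have hsplit : #{e ∈ T | a ≤ e.1 ∧ e.2 ≤ b}
      = headRank T a b + #{e ∈ T | a < e.1 ∧ e.1 < b} := by
    rw [headRank, ← card_union_of_disjoint (disjoint_filter.2 fun _ _ h1 h2 => by omega)]
    congr 1
    ext ⟨x, y⟩
    simp only [mem_filter, mem_union]
    constructor
    · rintro ⟨hx, hax, hyb⟩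
      rcases hax.eq_or_lt with rfl | hax
      · exact Or.inl ⟨hx, rfl, hyb⟩
      · exact Or.inr ⟨hx, hax, by have := (hd _ hx).1; dsimp only at this; omega⟩
    · rintro (⟨hx, rfl, hyb⟩ | ⟨hx, hax, hxb⟩)
      · exact ⟨hx, le_rfl, hyb⟩
      · exact ⟨hx, hax.le, snd_le_of_not_crossing (hnc _ hab _ hx) hax hxb⟩
  simp only [← card_filter_fst_eq_countP]
  refine ⟨by simp only [Set.mem_ofPred_eq]; omega, fun x hx => ?_⟩
  by_contra! hxb
  simp only [Set.mem_ofPred_eq] at hx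
  have hcover : #{e ∈ T | a < e.1 ∧ e.1 < b}
      ≤ #{e ∈ T | a < e.1 ∧ e.1 < x} + #{e ∈ T | x ≤ e.1 ∧ e.2 ≤ b} := by
    refine (card_le_card fun e he => ?_).trans (card_union_le _ _)
    obtain ⟨heT, hae, heb⟩ := mem_filter.1 he
    by_cases hex : e.1 < x
    · exact mem_union_left _ (mem_filter.2 ⟨heT, hae, hex⟩)
    · exact mem_union_right _ (mem_filter.2
        ⟨heT, by omega, snd_le_of_not_crossing (hnc _ hab _ heT) hae heb⟩)
  have hwindow := card_filter_within_le (fun p hp => (hd p hp).1) hnc x b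
  omega

theorem heads_eq (hT : IsTriangulation n T) (a : ℕ) :
    heads T a = (Icc 1 ((T.val.map Prod.fst).countP (· = a))).image
      (headOf (T.val.map Prod.fst) a) := by
  rw [← card_filter_fst_eq_countP]
  refine eq_of_subset_of_card_le (fun b hb => ?_) ?_
  · have hab := mem_heads.1 hb
    refine mem_image.2 ⟨headRank T a b, mem_Icc.2 ⟨card_pos.2 ⟨(a, b), ?_⟩, ?_⟩,
      (hT.isLeast_head hab).csInf_eq⟩
    · exact mem_filter.2 ⟨hab, rfl, le_rfl⟩
    · exact card_le_card (monotone_filter_right _ fun _ _ he => he.1)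
  · rw [card_heads]
    exact card_image_le.trans (by rw [Nat.card_Icc, Nat.add_sub_cancel])

end IsTriangulation

/-- Distinct triangulations of a convex `n`-gon have distinct decreasingly-ordered
sequences of tails of their diagonals: the map `Λ` is injective. -/
theorem tails_injective (n : ℕ) (A B : Finset (ℕ × ℕ))
    (hA : IsTriangulation n A) (hB : IsTriangulation n B)
    (h : tails A = tails B) : A = B := by
  have htails : A.val.map Prod.fst = B.val.map Prod.fst := by
    rw [← Multiset.sort_eq (A.val.map Prod.fst) (· ≥ ·),
      ← Multiset.sort_eq (B.val.map Prod.fst) (· ≥ ·)]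
    exact congrArg _ h
  ext ⟨a, b⟩
  rw [← mem_heads, ← mem_heads, hA.heads_eq, hB.heads_eq, htails]
end

section
/- The diagram flip operation is an involution: if N is obtained from M by a flip in row k with the row-lengths case μ_{k+1} = μ_k, then M is obtained back from N by a flip (in the appropriate row), and vice versa. -/
/-- `f` is a Young diagram (partition): weakly decreasing rows `f 1 ≥ f 2 ≥ …`,
finitely many of them nonzero. -/
def IsPartition (f : ℕ → ℕ) : Prop :=
  f 0 = 0 ∧ (∀ k, 1 ≤ k → f (k + 1) ≤ f k) ∧ ∃ B, ∀ k, B ≤ k → f k = 0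

/-- The multiset of the lengths of rows `1, …, B` of the diagram `f`. -/
def rowMultiset (f : ℕ → ℕ) (B : ℕ) : Multiset ℕ :=
  (Multiset.range B).map (fun j => f (j + 1))

/-- The length `l` of the row replacing row `k` under the flip in row `k` of the
diagram `M`:  if `μ_{k+1} = μ_k`, then `l = k + μ_k - max T_k` where
`T_k = {m : m < k, m + μ_m ≥ k + μ_k}` (and `l = k + μ_k` if `T_k = ∅`);
if `μ_{k+1} < μ_k`, then `l = k + μ_k - min T_k` where
`T_k = {m : m > k, m + μ_m ≥ k + μ_k}` (and `l = 0` if `T_k = ∅`). -/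
noncomputable def flipLength (M : ℕ → ℕ) (k : ℕ) : ℕ := by
  classical
  exact
  if M (k + 1) = M k then
    (if h : ((Finset.Ico 1 k).filter (fun m => k + M k ≤ m + M m)).Nonempty
     then k + M k - ((Finset.Ico 1 k).filter (fun m => k + M k ≤ m + M m)).max' h
     else k + M k)
  else
    (if h : {m : ℕ | k < m ∧ k + M k ≤ m + M m}.Nonempty
     then k + M k - sInf {m : ℕ | k < m ∧ k + M k ≤ m + M m}
     else 0)

/-- `N` is obtained from `M` by the flip in row `k`: throw away row `k` of `M`
(it may have length `0`) and insert a row of length `flipLength M k` in the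
unique place making the result a Young diagram.  (Equivalently, for every
sufficiently long initial segment of rows, the multisets of row lengths agree
after the exchange.) -/
def DiagramFlip (M : ℕ → ℕ) (k : ℕ) (N : ℕ → ℕ) : Prop :=
  IsPartition M ∧ IsPartition N ∧ 1 ≤ k ∧
  ∃ B₀, ∀ B, B₀ ≤ B →
    rowMultiset N B = flipLength M k ::ₘ (rowMultiset M B).erase (M k)

/-!
A flip deletes row `k` and inserts a row of length `l` where it fits. If `μ_{k+1} = μ_k` and
`t = max T_k`, the new row lands in position `t + 1` with a strict descent below it, so flipping
back in row `t + 1` follows the second rule; the hook sums `m + μ_m` of the rows it jumped over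
are below `k + μ_k`, which makes `k + 1` the minimum of the new `T`, and the returned length is
`(t + 1) + l - (k + 1) = μ_k`. If `μ_{k+1} < μ_k` and `s = min T_k`, then `μ_s = l`, the new row
sits in position `s` next to an equal row, and flipping back in row `s - 1` follows the first
rule with `max T = k - 1` (or `T = ∅` when `k = 1`), again returning `μ_k`.
-/

theorem IsPartition.antitoneOn {f : ℕ → ℕ} (hf : IsPartition f) : AntitoneOn f (Set.Ici 1) :=
  antitoneOn_nat_Ici_of_succ_le hf.2.1

theorem rowMultiset_eq_sum (f : ℕ → ℕ) (B : ℕ) :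
    rowMultiset f B = ∑ j ∈ Finset.Icc 1 B, {f j} := by
  induction B with
  | zero => rfl
  | succ B ih =>
    rw [rowMultiset, Multiset.range_succ, Multiset.map_cons, ← rowMultiset, ih,
      Finset.sum_Icc_succ_top (by omega), ← Multiset.singleton_add, add_comm]

theorem mem_rowMultiset (f : ℕ → ℕ) {k B : ℕ} (hk : 1 ≤ k) (hkB : k ≤ B) :
    f k ∈ rowMultiset f B :=
  Multiset.mem_map.2 ⟨k - 1, Multiset.mem_range.2 (by omega), by rw [Nat.sub_add_cancel hk]⟩

/- `moveRow M k p v` is `M` with row `k` deleted and a row of length `v` inserted as row `p`;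
for `j ≠ p`, its row `j` is row `shiftIndex k p j` of `M`. -/
def shiftIndex (k p j : ℕ) : ℕ :=
  if p < j ∧ j ≤ k then j - 1 else if k ≤ j ∧ j < p then j + 1 else j

def moveRow (M : ℕ → ℕ) (k p v j : ℕ) : ℕ :=
  if j = p then v else M (shiftIndex k p j)

section shiftIndex

variable {k p j : ℕ}

theorem shiftIndex_of_lt_of_lt (hjp : j < p) (hjk : j < k) : shiftIndex k p j = j := by
  unfold shiftIndex; split_ifs <;> omega

theorem shiftIndex_of_gt_of_gt (hpj : p < j) (hkj : k < j) : shiftIndex k p j = j := by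
  unfold shiftIndex; split_ifs <;> omega

theorem shiftIndex_of_lt_of_le (hpj : p < j) (hjk : j ≤ k) : shiftIndex k p j = j - 1 := by
  unfold shiftIndex; split_ifs <;> omega

theorem shiftIndex_of_le_of_lt (hkj : k ≤ j) (hjp : j < p) : shiftIndex k p j = j + 1 := by
  unfold shiftIndex; split_ifs <;> omega

end shiftIndex

theorem moveRow_self (M : ℕ → ℕ) (k p v : ℕ) : moveRow M k p v p = v := if_pos rfl

theorem moveRow_of_ne (M : ℕ → ℕ) {k p j : ℕ} (v : ℕ) (hj : j ≠ p) :
    moveRow M k p v j = M (shiftIndex k p j) := if_neg hj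

theorem cons_rowMultiset_moveRow (M : ℕ → ℕ) {k p B : ℕ} (v : ℕ) (hk : k ∈ Finset.Icc 1 B)
    (hp : p ∈ Finset.Icc 1 B) :
    M k ::ₘ rowMultiset (moveRow M k p v) B = v ::ₘ rowMultiset M B := by
  have hkB := Finset.mem_Icc.1 hk
  have hpB := Finset.mem_Icc.1 hp
  have hshift : ∑ j ∈ (Finset.Icc 1 B).erase p, ({M (shiftIndex k p j)} : Multiset ℕ) =
      ∑ j ∈ (Finset.Icc 1 B).erase k, {M j} := by
    refine Finset.sum_nbij' (shiftIndex k p) (shiftIndex p k) ?_ ?_ ?_ ?_ (fun _ _ => rfl) <;>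
      · simp only [Finset.mem_erase, Finset.mem_Icc, shiftIndex]
        intros; split_ifs <;> omega
  rw [rowMultiset_eq_sum, rowMultiset_eq_sum, ← Finset.add_sum_erase _ _ hp,
    ← Finset.add_sum_erase _ _ hk, Finset.sum_congr rfl fun j hj => by
      rw [moveRow_of_ne M v (Finset.ne_of_mem_erase hj)], hshift, moveRow_self]
  simp only [← Multiset.singleton_add]
  abel

theorem IsPartition.eq_of_rowMultiset_eq {P Q : ℕ → ℕ} (hP : IsPartition P) (hQ : IsPartition Q)
    {B₀ : ℕ} (h : ∀ B, B₀ ≤ B → rowMultiset P B = rowMultiset Q B) : P = Q := by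
  funext j
  obtain _ | i := j
  · rw [hP.1, hQ.1]
  have hsorted : ∀ f, IsPartition f →
      ((List.range (B₀ + i + 1)).map (fun j => f (j + 1))).Pairwise (· ≥ ·) := fun f hf =>
    List.pairwise_map.2 <| List.pairwise_lt_range.imp fun hab =>
      hf.antitoneOn (by simp) (by simp) (by omega)
  have hlists := (Multiset.coe_eq_coe.1 (h (B₀ + i + 1) (by omega))).eq_of_pairwise'
    (hsorted P hP) (hsorted Q hQ)
  simpa using congrArg (·[i]?) hlists

theorem isPartition_moveRow {M : ℕ → ℕ} (hM : IsPartition M) {k p v : ℕ} (hk : 1 ≤ k)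
    (hp : 1 ≤ p) (hprev : 2 ≤ p → v ≤ M (shiftIndex k p (p - 1)))
    (hnext : M (shiftIndex k p (p + 1)) ≤ v) : IsPartition (moveRow M k p v) := by
  obtain ⟨B, hB⟩ := hM.2.2
  refine ⟨?_, fun j hj => ?_, B + k + p, fun j hj => ?_⟩
  · rw [moveRow_of_ne _ _ (by omega), shiftIndex_of_lt_of_lt (by omega) (by omega), hM.1]
  · simp only [moveRow]
    split_ifs with hj₁ hj₀ hj₀
    · omega
    · subst hj₁; exact hprev (by omega)
    · subst hj₀; exact hnext
    · -- `shiftIndex k p` is monotone away from `p` and maps `j ≥ 1` to `≥ 1`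
      refine hM.antitoneOn ?_ ?_ ?_ <;>
        simp only [Set.mem_Ici, shiftIndex] <;> split_ifs <;> omega
  · rw [moveRow_of_ne _ _ (by omega), shiftIndex_of_gt_of_gt (by omega) (by omega)]
    exact hB j (by omega)

theorem flipLength_of_succ_eq {M : ℕ → ℕ} {k t : ℕ} (hk : M (k + 1) = M k) (htk : t < k)
    (ht : 1 ≤ t → k + M k ≤ t + M t) (hgt : ∀ m, t < m → m < k → m + M m < k + M k) :
    flipLength M k = k + M k - t := by
  set T := (Finset.Ico 1 k).filter (fun m => k + M k ≤ m + M m)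
  have hT : ∀ m ∈ T, m ≤ t := by
    intro m hm
    simp only [T, Finset.mem_filter, Finset.mem_Ico] at hm
    by_contra! hmt
    exact (hgt m hmt hm.1.2).not_ge hm.2
  rw [flipLength, if_pos hk]
  split_ifs with hne
  · congr
    refine le_antisymm (T.max'_le hne t hT) (T.le_max' t ?_)
    obtain ⟨m, hm⟩ := hne
    have := hT m hm
    simp only [T, Finset.mem_filter, Finset.mem_Ico] at hm ⊢
    exact ⟨⟨by omega, htk⟩, ht (by omega)⟩
  · obtain rfl | ht₀ : t = 0 ∨ 1 ≤ t := by omega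
    · rfl
    · exact absurd ⟨t, by simp [ht₀, htk, ht ht₀]⟩ hne

theorem exists_flipLength_of_succ_eq {M : ℕ → ℕ} {k : ℕ} (hk : M (k + 1) = M k)
    (hk₁ : 1 ≤ k) : ∃ t < k, (1 ≤ t → k + M k ≤ t + M t) ∧
      (∀ m, t < m → m < k → m + M m < k + M k) ∧ flipLength M k = k + M k - t := by
  set t := Nat.findGreatest (fun m => 1 ≤ m ∧ k + M k ≤ m + M m) (k - 1)
  have htk : t < k := (Nat.findGreatest_le _).trans_lt (by omega)
  have ht : 1 ≤ t → k + M k ≤ t + M t := fun ht₀ =>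
    (Nat.findGreatest_of_ne_zero (P := fun m => 1 ≤ m ∧ k + M k ≤ m + M m) rfl (by omega)).2
  have hgt : ∀ m, t < m → m < k → m + M m < k + M k := fun m htm hmk => by
    have := Nat.findGreatest_is_greatest htm (by omega)
    simp only [not_and, not_le] at this
    exact this (by omega)
  exact ⟨t, htk, ht, hgt, flipLength_of_succ_eq hk htk ht hgt⟩

theorem flipLength_of_succ_ne {M : ℕ → ℕ} {k s : ℕ} (hk : M (k + 1) ≠ M k) (hks : k < s)
    (hs : k + M k ≤ s + M s) (hlt : ∀ m, k < m → m < s → m + M m < k + M k) :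
    flipLength M k = k + M k - s := by
  have hleast : IsLeast {m | k < m ∧ k + M k ≤ m + M m} s :=
    ⟨⟨hks, hs⟩, fun m hm => by by_contra! hms; exact (hlt m hm.1 hms).not_ge hm.2⟩
  rw [flipLength, if_neg hk, dif_pos ⟨s, hleast.1⟩, hleast.csInf_eq]

theorem exists_flipLength_of_succ_ne {M : ℕ → ℕ} {k : ℕ} (hk : M (k + 1) ≠ M k)
    (hk₀ : 0 < M k) : ∃ s, k < s ∧ k + M k ≤ s + M s ∧
      (∀ m, k < m → m < s → m + M m < k + M k) ∧ flipLength M k = k + M k - s := by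
  have hex : ∃ s, k < s ∧ k + M k ≤ s + M s := ⟨k + M k, by omega, by omega⟩
  obtain ⟨hks, hs⟩ := Nat.find_spec hex
  have hlt : ∀ m, k < m → m < Nat.find hex → m + M m < k + M k := fun m hkm hm => by
    simpa [hkm] using Nat.find_min hex hm
  exact ⟨_, hks, hs, hlt, flipLength_of_succ_ne hk hks hs hlt⟩

theorem IsPartition.add_apply_eq_of_succ_ne {M : ℕ → ℕ} (hM : IsPartition M) {k s : ℕ}
    (hk : 1 ≤ k) (hsucc : M (k + 1) ≠ M k) (hks : k < s) (hs : k + M k ≤ s + M s)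
    (hlt : ∀ m, k < m → m < s → m + M m < k + M k) : s + M s = k + M k := by
  refine le_antisymm ?_ hs
  obtain rfl | hks' : s = k + 1 ∨ k + 1 < s := by omega
  · have := (hM.2.1 k hk).lt_of_ne hsucc
    omega
  · have := hlt (s - 1) (by omega) (by omega)
    have := hM.antitoneOn (a := s - 1) (b := s) (by simp; omega) (by simp; omega) (by omega)
    omega

namespace DiagramFlip

variable {M N : ℕ → ℕ} {k : ℕ}

theorem eq_moveRow (h : DiagramFlip M k N) {p : ℕ} (hp : 1 ≤ p)
    (hpart : IsPartition (moveRow M k p (flipLength M k))) :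
    N = moveRow M k p (flipLength M k) := by
  obtain ⟨-, hN, hk, B₀, hB⟩ := h
  refine hN.eq_of_rowMultiset_eq hpart (B₀ := B₀ + k + p) fun B hB' => ?_
  refine (Multiset.cons_inj_right (M k)).1 ?_
  rw [cons_rowMultiset_moveRow M _ (by simp; omega) (by simp; omega), hB B (by omega),
    Multiset.cons_swap, Multiset.cons_erase (mem_rowMultiset M hk (by omega))]

theorem symm_of_flipLength (h : DiagramFlip M k N) {k' : ℕ} (hk' : 1 ≤ k')
    (hrow : N k' = flipLength M k) (hlen : flipLength N k' = M k) : DiagramFlip N k' M := by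
  obtain ⟨hM, hN, hk, B₀, hB⟩ := h
  refine ⟨hN, hM, hk', B₀ + k, fun B hB' => ?_⟩
  rw [hlen, hrow, hB B (by omega), Multiset.erase_cons_head,
    Multiset.cons_erase (mem_rowMultiset M hk (by omega))]

theorem exists_symm_of_succ_eq (h : DiagramFlip M k N) (hsucc : M (k + 1) = M k) :
    ∃ k', DiagramFlip N k' M := by
  obtain ⟨hM, -, hk, -⟩ := id h
  obtain ⟨t, htk, ht, hgt, hlen⟩ := exists_flipLength_of_succ_eq hsucc hk
  have hnext : M (shiftIndex k (t + 1) (t + 1 + 1)) < flipLength M k := by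
    obtain htk' | rfl : t + 1 < k ∨ t + 1 = k := by omega
    · have := hgt (t + 1) (by omega) htk'
      rw [shiftIndex_of_lt_of_le (by omega) (by omega), Nat.add_sub_cancel]
      omega
    · rw [shiftIndex_of_gt_of_gt (by omega) (by omega)]
      omega
  have hprev : 2 ≤ t + 1 → flipLength M k ≤ M (shiftIndex k (t + 1) (t + 1 - 1)) := fun ht₁ => by
    have := ht (by omega)
    rw [Nat.add_sub_cancel, shiftIndex_of_lt_of_lt (by omega) htk]
    omega
  have hpart := isPartition_moveRow hM hk (by omega) hprev hnext.le
  have hN := h.eq_moveRow (by omega) hpart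
  have hrow : N (t + 1) = flipLength M k := by rw [hN, moveRow_self]
  have hnext' : N (t + 1 + 1) ≠ N (t + 1) := by
    rw [hrow, hN, moveRow_of_ne _ _ (by omega)]
    exact hnext.ne
  have hlast : N (k + 1) = M k := by
    rw [hN, moveRow_of_ne _ _ (by omega), shiftIndex_of_gt_of_gt (by omega) k.lt_succ_self,
      hsucc]
  have hmid : ∀ m, t + 1 < m → m < k + 1 → m + N m < t + 1 + N (t + 1) := fun m hm hmk => by
    have := hgt (m - 1) (by omega) (by omega)
    rw [hrow, hN, moveRow_of_ne _ _ (by omega), shiftIndex_of_lt_of_le hm (by omega)]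
    omega
  refine ⟨t + 1, h.symm_of_flipLength (by omega) hrow ?_⟩
  rw [flipLength_of_succ_ne hnext' (by omega) (by omega) hmid]
  omega

theorem exists_symm_of_succ_ne (h : DiagramFlip M k N) (hsucc : M (k + 1) ≠ M k) :
    ∃ k', DiagramFlip N k' M := by
  obtain ⟨hM, -, hk, -⟩ := id h
  have hlt_k : M (k + 1) < M k := (hM.2.1 k hk).lt_of_ne hsucc
  obtain ⟨s, hks, hs, hlt, hlen⟩ := exists_flipLength_of_succ_ne hsucc (by omega)
  have hhook := hM.add_apply_eq_of_succ_ne hk hsucc hks hs hlt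
  have hMs : M s = flipLength M k := by omega
  have hpart := isPartition_moveRow hM hk (p := s) (v := flipLength M k) (by omega)
    (fun _ => by rw [shiftIndex_of_le_of_lt (by omega) (by omega), Nat.sub_add_cancel (by omega),
      hMs])
    (by rw [shiftIndex_of_gt_of_gt (by omega) (by omega), ← hMs]; exact hM.2.1 s (by omega))
  have hN := h.eq_moveRow (by omega) hpart
  have hrow : N (s - 1) = flipLength M k := by
    rw [hN, moveRow_of_ne _ _ (by omega), shiftIndex_of_le_of_lt (by omega) (by omega),
      Nat.sub_add_cancel (by omega), hMs]
  have hsucc' : N (s - 1 + 1) = N (s - 1) := by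
    rw [Nat.sub_add_cancel (by omega), hrow, hN, moveRow_self]
  have hprev : 1 ≤ k - 1 → s - 1 + N (s - 1) ≤ k - 1 + N (k - 1) := fun hk₂ => by
    have := hM.antitoneOn (a := k - 1) (b := k) (by simp; omega) (by simp; omega) (by omega)
    rw [hrow, hN, moveRow_of_ne _ _ (by omega), shiftIndex_of_lt_of_lt (by omega) (by omega)]
    omega
  have hmid : ∀ m, k - 1 < m → m < s - 1 → m + N m < s - 1 + N (s - 1) := fun m hkm hms => by
    have := hlt (m + 1) (by omega) (by omega)
    rw [hrow, hN, moveRow_of_ne _ _ (by omega), shiftIndex_of_le_of_lt (by omega) (by omega)]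
    omega
  refine ⟨s - 1, h.symm_of_flipLength (by omega) hrow ?_⟩
  rw [flipLength_of_succ_eq hsucc' (by omega) hprev hmid]
  omega

end DiagramFlip

/-- The diagram flip operation is an involution: if `N` is obtained from `M` by
a flip in row `k` (in particular in the case `μ_{k+1} = μ_k`), then `M` is
obtained back from `N` by a flip in the appropriate row, and vice versa. -/
theorem diagramFlip_involutive (M N : ℕ → ℕ) (k : ℕ)
    (h : DiagramFlip M k N) :
    ∃ k', DiagramFlip N k' M := by
  by_cases hsucc : M (k + 1) = M k
  · exact h.exists_symm_of_succ_eq hsucc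
  · exact h.exists_symm_of_succ_ne hsucc
end

section
/- The action of the rotation β of the dihedral group D_{n+2} on Y_n, transported through the bijection Λ_{n+2} from triangulations of the (n+2)-gon, is given as follows: if A ∈ Y_n has rows of lengths a_i with a_i ≤ n - i, then βA has rows of lengths a_i + 1 for those i with a_i < n - i, and rows of length 0 otherwise, decreasingly ordered. -/
/-- `lam T k` is the `k`-th largest tail `λ_k` of a diagonal of `T`
(`k ≥ 1`; it is `0` if `T` has fewer than `k` diagonals). -/
def lam (T : Finset (ℕ × ℕ)) : ℕ → ℕ :=
  fun k => if k = 0 then 0 else (tails T).getD (k - 1) 0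

/-- The rotation `β : v ↦ v + 1 (mod m)` applied to a diagonal, with endpoints
reordered so that the smaller comes first. -/
def rotDiag (m : ℕ) (p : ℕ × ℕ) : ℕ × ℕ :=
  (min ((p.1 + 1) % m) ((p.2 + 1) % m), max ((p.1 + 1) % m) ((p.2 + 1) % m))

/-- The rotation `β` applied to a triangulation. -/
def rotTri (m : ℕ) (T : Finset (ℕ × ℕ)) : Finset (ℕ × ℕ) :=
  T.image (rotDiag m)

/-! The rotation sends a diagonal `(a, b)` with `b < n + 1` to `(a + 1, b + 1)` and a diagonal
`(a, n + 1)` to `(0, a + 1)`, so the tails of `βT` are the numbers `a + 1` for the diagonals of the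
first kind together with one `0` for each diagonal of the second kind. It therefore suffices that
the rows of `Λ(T)` of maximal length `λ_i = n - i` are exactly the tails of the diagonals ending at
`n + 1`.

A noncrossing set of diagonals of an `m`-gon has at most `m - 3` elements. Applied to the
diagonals with tail `≥ t`, shifted down by `t`, this shows that at most `n - t` of them exist,
and at most `n - t - 1` unless `(t, n + 1) ∈ T`. Conversely, if `(t, n + 1) ∈ T`, the diagonals with
tail `< t` lie in the `(t + 2)`-gon `0, …, t, n + 1`, so at least `n - t` diagonals have
tail `≥ t`. Reading these counts off the decreasingly sorted tails gives `λ_i ≤ n - i`, with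
equality iff `(n - i, n + 1) ∈ T`. -/

lemma Multiset.map_ite_eq_add {α β : Type*} (s : Multiset α) (p : α → Prop) [DecidablePred p]
    (f g : α → β) : s.map (fun x => if p x then f x else g x) =
      (s.filter p).map f + (s.filter (fun x => ¬p x)).map g := by
  conv_lhs => rw [← Multiset.filter_add_not (p := p) s]
  rw [Multiset.map_add]
  congr 1 <;> refine Multiset.map_congr rfl fun x hx => ?_
  · rw [if_pos (Multiset.mem_filter.1 hx).2]
  · rw [if_neg (Multiset.mem_filter.1 hx).2]

lemma Multiset.map_filter_not_eq_of_map_eq {α β γ : Type*} {s : Multiset α} {t : Multiset β}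
    {p : α → Prop} [DecidablePred p] {q : β → Prop} [DecidablePred q] {f : α → γ} {g : β → γ}
    (h : s.map f = t.map g) (hp : (s.filter p).map f = (t.filter q).map g) :
    (s.filter (fun x => ¬p x)).map f = (t.filter (fun x => ¬q x)).map g := by
  rw [← Multiset.filter_add_not (p := p) s, ← Multiset.filter_add_not (p := q) t,
    Multiset.map_add, Multiset.map_add, hp] at h
  exact add_left_cancel h

lemma List.le_getD_iff_lt_countP {l : List ℕ} (hl : l.Pairwise (· ≥ ·)) {t : ℕ} (ht : 0 < t)
    (k : ℕ) : t ≤ l.getD k 0 ↔ k < l.countP (fun x => t ≤ x) := by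
  induction l generalizing k with
  | nil => simp only [List.getD_nil, List.countP_nil]; omega
  | cons x xs ih =>
    obtain ⟨hx, hxs⟩ := List.pairwise_cons.1 hl
    by_cases htx : t ≤ x
    · cases k with
      | zero => simp [htx]
      | succ k => rw [List.getD_cons_succ, ih hxs k, List.countP_cons]; simp [htx]
    · have hsmall : ∀ y ∈ x :: xs, y < t := by
        simp only [List.mem_cons, forall_eq_or_imp]
        exact ⟨by omega, fun y hy => by have := hx y hy; omega⟩
      have hzero : (x :: xs).countP (fun y => t ≤ y) = 0 :=
        List.countP_eq_zero.2 fun y hy => by simpa using hsmall y hy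
      rw [hzero]
      have : (x :: xs).getD k 0 < t := by
        by_cases hk : k < (x :: xs).length
        · exact List.getD_eq_getElem _ _ hk ▸ hsmall _ (List.getElem_mem hk)
        · exact List.getD_eq_default _ _ (not_lt.1 hk) ▸ ht
      omega

lemma le_lam_succ_iff (D : Finset (ℕ × ℕ)) {t : ℕ} (ht : 0 < t) (j : ℕ) :
    t ≤ lam D (j + 1) ↔ j < (D.filter (fun p => t ≤ p.1)).card := by
  have hcount : (tails D).countP (fun x => t ≤ x) = (D.filter (fun p => t ≤ p.1)).card := by
    rw [← Multiset.coe_countP, tails, Multiset.sort_eq, Multiset.countP_map, Finset.card,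
      Finset.filter_val]
  have hsort : (tails D).Pairwise (· ≥ ·) := Multiset.pairwise_sort _ _
  simp only [lam, Nat.add_sub_cancel, if_neg (Nat.succ_ne_zero j)]
  rw [List.le_getD_iff_lt_countP hsort ht, hcount]

lemma rowMultiset_lam_card (D : Finset (ℕ × ℕ)) :
    rowMultiset (lam D) D.card = D.val.map Prod.fst := by
  have hlen : (tails D).length = D.card := by simp [tails]
  have : (List.range D.card).map (fun j => lam D (j + 1)) = tails D := by
    refine List.ext_getElem (by simp [hlen]) fun i h₁ h₂ => ?_
    simp [lam, List.getElem?_eq_getElem h₂]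
  rw [rowMultiset, ← Multiset.coe_range, Multiset.map_coe, this, tails, Multiset.sort_eq]

def IsNoncrossing (m : ℕ) (D : Finset (ℕ × ℕ)) : Prop :=
  (∀ p ∈ D, IsDiagonal m p.1 p.2) ∧ ∀ p ∈ D, ∀ q ∈ D, ¬ Crossing p q

lemma IsTriangulation.isNoncrossing {m : ℕ} {T : Finset (ℕ × ℕ)} (hT : IsTriangulation m T) :
    IsNoncrossing m T :=
  ⟨hT.1, hT.2.1⟩

lemma IsNoncrossing.subset {m : ℕ} {D D' : Finset (ℕ × ℕ)} (hD : IsNoncrossing m D)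
    (h : D' ⊆ D) : IsNoncrossing m D' :=
  ⟨fun p hp => hD.1 p (h hp), fun p hp q hq => hD.2 p (h hp) q (h hq)⟩

lemma crossing_map_iff {φ : ℕ → ℕ} {S : Set ℕ} (hφ : StrictMonoOn φ S) {a b c d : ℕ}
    (ha : a ∈ S) (hb : b ∈ S) (hc : c ∈ S) (hd : d ∈ S) :
    Crossing (φ a, φ b) (φ c, φ d) ↔ Crossing (a, b) (c, d) := by
  simp only [Crossing, hφ.lt_iff_lt, ha, hb, hc, hd]

section StrictMonoOn

variable {m m' : ℕ} {D : Finset (ℕ × ℕ)} {φ : ℕ → ℕ} {S : Set ℕ}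

lemma card_image_prodMap (hφ : StrictMonoOn φ S) (hS : ∀ p ∈ D, p.1 ∈ S ∧ p.2 ∈ S) :
    (D.image (Prod.map φ φ)).card = D.card :=
  Finset.card_image_of_injOn fun p hp q hq h =>
    Prod.ext (hφ.injOn (hS p hp).1 (hS q hq).1 (congrArg Prod.fst h))
      (hφ.injOn (hS p hp).2 (hS q hq).2 (congrArg Prod.snd h))

lemma IsNoncrossing.image (hD : IsNoncrossing m D) (hφ : StrictMonoOn φ S)
    (hS : ∀ p ∈ D, p.1 ∈ S ∧ p.2 ∈ S) (hdiag : ∀ p ∈ D, IsDiagonal m' (φ p.1) (φ p.2)) :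
    IsNoncrossing m' (D.image (Prod.map φ φ)) := by
  refine ⟨Finset.forall_mem_image.2 hdiag, ?_⟩
  simp only [Finset.forall_mem_image]
  rintro ⟨a, b⟩ hp ⟨c, d⟩ hq
  rw [Prod.map_apply, Prod.map_apply,
    crossing_map_iff hφ (hS _ hp).1 (hS _ hp).2 (hS _ hq).1 (hS _ hq).2]
  exact hD.2 _ hp _ hq

end StrictMonoOn

/-- A shortest diagonal `d` has no endpoint of another diagonal strictly between its ends, so
shifting the vertices beyond `d.1` down by one turns the other diagonals into a noncrossing set
of the `(m - 1)`-gon. -/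
theorem IsNoncrossing.card_le {m : ℕ} {D : Finset (ℕ × ℕ)} (hD : IsNoncrossing m D) :
    D.card ≤ m - 3 := by
  induction m using Nat.strong_induction_on generalizing D with
  | _ m ih =>
  rcases D.eq_empty_or_nonempty with rfl | hne
  · simp
  obtain ⟨d, hd, hmin⟩ := D.exists_min_image (fun p => p.2 - p.1) hne
  obtain ⟨hd₁, hd₂, hd₃⟩ := hD.1 d hd
  let S : Set ℕ := {x | x ≤ d.1 ∨ d.2 ≤ x}
  have hS : ∀ q ∈ D, q.1 ∈ S ∧ q.2 ∈ S := by
    intro q hq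
    have := hmin q hq
    have h₁ := hD.2 d hd q hq
    have h₂ := hD.2 q hq d hd
    have := (hD.1 q hq).1
    simp only [Crossing, S, Set.mem_ofPred_eq] at *
    omega
  let φ : ℕ → ℕ := fun x => if x ≤ d.1 then x else x - 1
  have hφ : StrictMonoOn φ S := by
    intro x hx y hy hxy
    simp only [φ, S, Set.mem_ofPred_eq] at *
    split_ifs <;> omega
  have hdiag : ∀ q ∈ D.erase d, IsDiagonal (m - 1) (φ q.1) (φ q.2) := by
    intro q hq
    obtain ⟨hqd, hq⟩ := Finset.mem_erase.1 hq
    obtain ⟨hq₁, hq₂, hq₃⟩ := hD.1 q hq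
    have := hS q hq
    have : q.1 ≠ d.1 ∨ q.2 ≠ d.2 := by
      by_contra! h
      exact hqd (Prod.ext h.1 h.2)
    simp only [IsDiagonal, φ, S, Set.mem_ofPred_eq] at *
    split_ifs <;> omega
  have hS' : ∀ q ∈ D.erase d, q.1 ∈ S ∧ q.2 ∈ S := fun q hq => hS q (Finset.mem_of_mem_erase hq)
  have := ih (m - 1) (by omega)
    (((hD.subset (Finset.erase_subset d D)).image hφ hS' hdiag))
  rw [card_image_prodMap hφ hS', Finset.card_erase_of_mem hd] at this
  omega

lemma IsNoncrossing.card_le_of_strictMonoOn {m m' : ℕ} {D : Finset (ℕ × ℕ)}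
    (hD : IsNoncrossing m D) {φ : ℕ → ℕ} {S : Set ℕ} (hφ : StrictMonoOn φ S)
    (hS : ∀ p ∈ D, p.1 ∈ S ∧ p.2 ∈ S) (hdiag : ∀ p ∈ D, IsDiagonal m' (φ p.1) (φ p.2)) :
    D.card ≤ m' - 3 :=
  card_image_prodMap hφ hS ▸ (hD.image hφ hS hdiag).card_le

section TailCount

variable {m : ℕ} {D : Finset (ℕ × ℕ)}

lemma IsNoncrossing.card_filter_tail_erase_le (hD : IsNoncrossing m D) (t : ℕ) :
    ((D.filter (fun p => t ≤ p.1)).erase (t, m - 1)).card ≤ m - t - 3 := by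
  have hsub : (D.filter (fun p => t ≤ p.1)).erase (t, m - 1) ⊆ D :=
    (Finset.erase_subset _ _).trans (Finset.filter_subset _ _)
  refine (hD.subset hsub).card_le_of_strictMonoOn (S := Set.Ici t) (φ := (· - t))
    (fun x hx y hy hxy => by simp only [Set.mem_Ici] at hx hy; show x - t < y - t; omega) ?_ ?_
  · intro p hp
    have := (Finset.mem_filter.1 (Finset.mem_of_mem_erase hp)).2
    have := (hD.1 p (hsub hp)).1
    simp only [Set.mem_Ici]
    omega
  · intro p hp
    obtain ⟨hpe, hp⟩ := Finset.mem_erase.1 hp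
    obtain ⟨hp, ht⟩ := Finset.mem_filter.1 hp
    obtain ⟨hp₁, hp₂, hp₃⟩ := hD.1 p hp
    have : p.1 ≠ t ∨ p.2 ≠ m - 1 := by
      by_contra! h
      exact hpe (Prod.ext h.1 h.2)
    simp only [IsDiagonal]
    omega

lemma IsNoncrossing.card_filter_tail_le (hD : IsNoncrossing m D) (t : ℕ) :
    (D.filter (fun p => t ≤ p.1)).card ≤ m - t - 2 := by
  rcases le_or_gt (t + 3) m with ht | ht
  · have := hD.card_filter_tail_erase_le t
    have := Finset.pred_card_le_card_erase (s := D.filter (fun p => t ≤ p.1)) (a := (t, m - 1))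
    omega
  · rw [Finset.card_eq_zero.2]
    · exact Nat.zero_le _
    refine Finset.filter_eq_empty_iff.2 fun p hp => ?_
    have := hD.1 p hp
    simp only [IsDiagonal] at this
    omega

lemma IsNoncrossing.card_filter_tail_le_of_notMem (hD : IsNoncrossing m D) {t : ℕ}
    (h : (t, m - 1) ∉ D) : (D.filter (fun p => t ≤ p.1)).card ≤ m - t - 3 := by
  have := hD.card_filter_tail_erase_le t
  rwa [Finset.erase_eq_of_notMem fun h' => h (Finset.mem_of_mem_filter _ h')] at this

/-- The diagonals with tail `< t` cannot cross `(t, m - 1)`, so they live in the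
`(t + 2)`-gon with vertices `0, …, t, m - 1`: there are at most `t - 1` of them. -/
lemma IsTriangulation.le_card_filter_tail_of_mem (hT : IsTriangulation m D) {t : ℕ}
    (h : (t, m - 1) ∈ D) : m - t - 2 ≤ (D.filter (fun p => t ≤ p.1)).card := by
  have hD := hT.isNoncrossing
  obtain ⟨ht₁, -, ht₃⟩ := hD.1 _ h
  simp only [and_true] at ht₁ ht₃
  let S : Set ℕ := {x | x ≤ t ∨ x = m - 1}
  have hS : ∀ p ∈ D.filter (fun p => ¬ t ≤ p.1), p.1 ∈ S ∧ p.2 ∈ S := by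
    intro p hp
    obtain ⟨hp, hpt⟩ := Finset.mem_filter.1 hp
    have := hD.2 _ h p hp
    have := hD.1 p hp
    simp only [Crossing, IsDiagonal, S, Set.mem_ofPred_eq] at *
    omega
  let ψ : ℕ → ℕ := fun x => if x ≤ t then x else t + 1
  have hψ : StrictMonoOn ψ S := by
    intro x hx y hy hxy
    simp only [ψ, S, Set.mem_ofPred_eq] at *
    split_ifs <;> omega
  have hlow := (hD.subset (Finset.filter_subset _ _)).card_le_of_strictMonoOn (m' := t + 2)
    hψ hS (by
      intro p hp
      have := hS p hp
      obtain ⟨hp, hpt⟩ := Finset.mem_filter.1 hp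
      have := hD.1 p hp
      simp only [IsDiagonal, ψ, S, Set.mem_ofPred_eq] at *
      split_ifs <;> omega)
  have := Finset.card_filter_add_card_filter_not (s := D) (fun p : ℕ × ℕ => t ≤ p.1)
  have := hT.2.2
  omega

lemma IsTriangulation.mem_iff_le_card_filter_tail (hT : IsTriangulation m D) {t : ℕ}
    (ht : t + 3 ≤ m) : (t, m - 1) ∈ D ↔ m - t - 2 ≤ (D.filter (fun p => t ≤ p.1)).card := by
  refine ⟨hT.le_card_filter_tail_of_mem, fun h => ?_⟩
  by_contra hmem
  have := hT.isNoncrossing.card_filter_tail_le_of_notMem hmem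
  omega

end TailCount

section RowLengths

variable {n : ℕ} {T : Finset (ℕ × ℕ)}

lemma IsTriangulation.lam_succ_le (hT : IsTriangulation (n + 2) T) {j : ℕ} (hj : j < n) :
    lam T (j + 1) ≤ n - (j + 1) := by
  by_contra! h
  have := (le_lam_succ_iff T (t := n - j) (by omega) j).1 (by omega)
  have := hT.isNoncrossing.card_filter_tail_le (n - j)
  omega

lemma IsTriangulation.lam_succ_eq_iff (hT : IsTriangulation (n + 2) T) {j : ℕ} (hj : j + 1 < n) :
    lam T (j + 1) = n - (j + 1) ↔ (n - (j + 1), n + 1) ∈ T := by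
  have hmem := hT.mem_iff_le_card_filter_tail (t := n - (j + 1)) (by omega)
  rw [show n + 2 - (n - (j + 1)) - 2 = j + 1 by omega] at hmem
  have hle := hT.lam_succ_le (j := j) (by omega)
  rw [show n + 2 - 1 = n + 1 from rfl, ← Nat.lt_iff_add_one_le,
    ← le_lam_succ_iff T (by omega)] at hmem
  rw [hmem]
  exact ⟨ge_of_eq, le_antisymm hle⟩

lemma IsTriangulation.map_lam_filter_maximal (hT : IsTriangulation (n + 2) T) :
    ((Multiset.range (n - 1)).filter (fun j => (n - (j + 1), n + 1) ∈ T)).map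
        (fun j => lam T (j + 1)) = (T.val.filter (fun p => p.2 = n + 1)).map Prod.fst := by
  rw [Multiset.map_congr rfl fun j hj => (hT.lam_succ_eq_iff (by
    have := Multiset.mem_range.1 (Multiset.mem_filter.1 hj).1; omega)).2
      (Multiset.mem_filter.1 hj).2]
  refine (Multiset.Nodup.ext ?_ ?_).2 fun a => ?_
  · refine ((Multiset.nodup_range _).filter _).map_on fun x hx y hy h => ?_
    have := Multiset.mem_range.1 (Multiset.mem_filter.1 hx).1
    have := Multiset.mem_range.1 (Multiset.mem_filter.1 hy).1
    omega
  · exact (T.nodup.filter _).map_on fun p hp q hq h =>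
      Prod.ext h ((Multiset.mem_filter.1 hp).2.trans (Multiset.mem_filter.1 hq).2.symm)
  · simp only [Multiset.mem_map, Multiset.mem_filter, Multiset.mem_range, Finset.mem_val]
    constructor
    · rintro ⟨j, ⟨-, hj⟩, rfl⟩
      exact ⟨_, ⟨hj, rfl⟩, rfl⟩
    · rintro ⟨⟨a, b⟩, ⟨hp, hb⟩, rfl⟩
      obtain ⟨h₁, h₂, h₃⟩ := hT.1 _ hp
      simp only at hb h₁ h₂ h₃ ⊢
      subst hb
      exact ⟨n - 1 - a, ⟨by omega, by convert hp using 3; omega⟩, by omega⟩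

end RowLengths

lemma IsDiagonal.rotDiag_eq {m : ℕ} {p : ℕ × ℕ} (hp : IsDiagonal m p.1 p.2) :
    rotDiag m p = if p.2 = m - 1 then (0, p.1 + 1) else (p.1 + 1, p.2 + 1) := by
  obtain ⟨h₁, h₂, -⟩ := hp
  have ha : (p.1 + 1) % m = p.1 + 1 := Nat.mod_eq_of_lt (by omega)
  split_ifs with h
  · have hb : (p.2 + 1) % m = 0 := by rw [show p.2 + 1 = m by omega, Nat.mod_self]
    simp only [rotDiag, ha, hb, Nat.min_zero, Nat.max_zero]
  · have hb : (p.2 + 1) % m = p.2 + 1 := Nat.mod_eq_of_lt (by omega)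
    simp only [rotDiag, ha, hb]
    rw [min_eq_left (by omega), max_eq_right (by omega)]

lemma injOn_rotDiag {m : ℕ} {D : Finset (ℕ × ℕ)} (hD : ∀ p ∈ D, IsDiagonal m p.1 p.2) :
    Set.InjOn (rotDiag m) D := by
  intro p hp q hq h
  have := hD p hp
  have := hD q hq
  rw [(hD p hp).rotDiag_eq, (hD q hq).rotDiag_eq] at h
  simp only [IsDiagonal] at *
  split_ifs at h <;> simp only [Prod.mk.injEq] at h <;> ext <;> omega

/-- The action of the rotation `β ∈ D_{n+2}` transported to `Y_n` via `Λ_{n+2}`: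
if `A = Λ(T)` has rows `a_i ≤ n - i`, then `β A` has rows `a_i + 1` for those
`i` with `a_i < n - i` and rows of length `0` otherwise, decreasingly ordered. -/
theorem rotation_on_diagrams (n : ℕ) (T : Finset (ℕ × ℕ))
    (hT : IsTriangulation (n + 2) T) :
    rowMultiset (lam (rotTri (n + 2) T)) (n - 1) =
      (Multiset.range (n - 1)).map
        (fun j => if lam T (j + 1) < n - (j + 1) then lam T (j + 1) + 1 else 0) := by
  have hcard : T.card = n - 1 := by have := hT.2.2; omega
  have hrot : (rotTri (n + 2) T).card = n - 1 :=
    hcard ▸ Finset.card_image_of_injOn (injOn_rotDiag hT.1)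
  have hrows : (Multiset.range (n - 1)).map (fun j => lam T (j + 1)) = T.val.map Prod.fst :=
    hcard ▸ rowMultiset_lam_card T
  have hLHS : rowMultiset (lam (rotTri (n + 2) T)) (n - 1) =
      T.val.map (fun p => if p.2 = n + 1 then 0 else p.1 + 1) := by
    rw [← hrot, rowMultiset_lam_card, rotTri, Finset.image_val_of_injOn (injOn_rotDiag hT.1),
      Multiset.map_map]
    refine Multiset.map_congr rfl fun p hp => ?_
    rw [Function.comp_apply, (hT.1 p hp).rotDiag_eq, show n + 2 - 1 = n + 1 from rfl]
    split_ifs <;> rfl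
  have hRHS : (Multiset.range (n - 1)).map
      (fun j => if lam T (j + 1) < n - (j + 1) then lam T (j + 1) + 1 else 0) =
      (Multiset.range (n - 1)).map
        (fun j => if (n - (j + 1), n + 1) ∈ T then 0 else lam T (j + 1) + 1) := by
    refine Multiset.map_congr rfl fun j hj => ?_
    have hj := Multiset.mem_range.1 hj
    simp only [(hT.lam_succ_le (j := j) (by omega)).lt_iff_ne, Ne,
      hT.lam_succ_eq_iff (j := j) (by omega), ite_not]
  have hmax := hT.map_lam_filter_maximal
  have hrest := Multiset.map_filter_not_eq_of_map_eq hrows hmax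
  rw [hLHS, hRHS, Multiset.map_ite_eq_add, Multiset.map_ite_eq_add, Multiset.map_const',
    Multiset.map_const', ← Multiset.card_map (fun j => lam T (j + 1)), hmax, Multiset.card_map]
  have hsucc := congrArg (Multiset.map (· + 1)) hrest
  simp only [Multiset.map_map, Function.comp_def] at hsucc
  rw [hsucc]
end

section
/- The quivers A_n^alt (the path graph on n vertices with alternating edge orientations: 1→2←3→4←...) and the linearly oriented quiver A_n (1→2→3→...→n) are mutation equivalent. -/
/-
The two quivers are orientations of the same path, recorded by the signs `ε i = ±1` of its
edges. Mutation at a sink or source `k` creates no new arrows and only reverses the two edges at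
`k`. If the edge at position `p` is reversed and all edges to its right are not, mutating at
`p + 1, p + 2, …, n - 1` in turn pushes the reversed edge to the end of the path, where the last
mutation straightens it. Removing the reversed edges from right to left reaches `A_n`.
-/

/-- Quiver mutation at vertex `k`, in terms of the skew-symmetric exchange
matrix of the quiver (`B i j` = number of arrows from `i` to `j`, counted with
sign): reverse all arrows incident to `k` and for each pair of arrows
`i → k → j` add an arrow `i → j`, cancelling `2`-cycles. -/
def mutateMat {n : ℕ} (B : Fin n → Fin n → ℤ) (k : Fin n) : Fin n → Fin n → ℤ :=
  fun i j =>
    if i = k ∨ j = k then -B i j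
    else B i j + max (B i k) 0 * max (B k j) 0 - max (-B i k) 0 * max (-B k j) 0

/-- Two quivers (exchange matrices) are mutation equivalent if one can be
obtained from the other by a finite sequence of mutations, up to an
isomorphism (relabelling of the vertices). -/
def MutationEquiv {n : ℕ} (B B' : Fin n → Fin n → ℤ) : Prop :=
  ∃ σ : Equiv.Perm (Fin n),
    Relation.ReflTransGen (fun X Y => ∃ k, Y = mutateMat X k) B
      (fun i j => B' (σ i) (σ j))

/-- The linearly oriented quiver `A_n`: arrows `i → i+1`. -/
def linA (n : ℕ) : Fin n → Fin n → ℤ := fun i j =>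
  if (j : ℕ) = i + 1 then 1 else if (i : ℕ) = j + 1 then -1 else 0

/-- The alternating quiver `A_n^alt`: the path graph on `n` vertices with
alternating orientations `1 → 2 ← 3 → 4 ← …` (here `0`-indexed). -/
def altA (n : ℕ) : Fin n → Fin n → ℤ := fun i j =>
  if (j : ℕ) = i + 1 then (if Even (i : ℕ) then 1 else -1)
  else if (i : ℕ) = j + 1 then (if Even (j : ℕ) then -1 else 1)
  else 0

local notation "MutationReach" => Relation.ReflTransGen (fun X Y => ∃ k, Y = mutateMat X k)

lemma max_zero_mul_max_zero_of_mul_nonpos {x y : ℤ} (h : x * y ≤ 0) :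
    max x 0 * max y 0 = 0 := by
  rcases le_total x 0 with hx | hx
  · simp [max_eq_right hx]
  · rcases le_total y 0 with hy | hy
    · simp [max_eq_right hy]
    · rw [max_eq_left hx, max_eq_left hy]
      exact le_antisymm h (mul_nonneg hx hy)

lemma mutateMat_eq_of_mul_nonpos {n : ℕ} (B : Fin n → Fin n → ℤ) (k : Fin n)
    (hk : ∀ i j, B i k * B k j ≤ 0) :
    mutateMat B k = fun i j => if i = k ∨ j = k then -B i j else B i j := by
  funext i j
  have hneg : -B i k * -B k j ≤ 0 := by rw [neg_mul_neg]; exact hk i j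
  simp only [mutateMat, max_zero_mul_max_zero_of_mul_nonpos (hk i j),
    max_zero_mul_max_zero_of_mul_nonpos hneg, add_zero, sub_zero]

def pathMat (n : ℕ) (ε : ℕ → ℤ) : Fin n → Fin n → ℤ := fun i j =>
  if (j : ℕ) = i + 1 then ε i else if (i : ℕ) = j + 1 then -ε j else 0

lemma pathMat_congr {n : ℕ} {ε ε' : ℕ → ℤ} (h : ∀ i, i + 1 < n → ε i = ε' i) :
    pathMat n ε = pathMat n ε' := by
  funext i j
  have := i.isLt
  have := j.isLt
  simp only [pathMat]
  split_ifs <;> first | rfl | rw [h _ (by omega)]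

lemma mutateMat_pathMat {n : ℕ} (ε : ℕ → ℤ) (k : Fin n)
    (hk : 0 < (k : ℕ) → (k : ℕ) + 1 < n → ε (k - 1) * ε k ≤ 0) :
    mutateMat (pathMat n ε) k =
      pathMat n (fun i => if i + 1 = k ∨ i = k then -ε i else ε i) := by
  rw [mutateMat_eq_of_mul_nonpos]
  · funext i j
    simp only [pathMat, Fin.ext_iff]
    split_ifs <;> first | rfl | omega
  · intro i j
    have := i.isLt
    have := j.isLt
    simp only [pathMat]
    split_ifs <;> try simp only [mul_zero, zero_mul, le_refl]
    · rw [show (i : ℕ) = k - 1 by omega]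
      exact hk (by omega) (by omega)
    · rw [show (j : ℕ) = i by omega, mul_neg]
      exact neg_nonpos.2 (mul_self_nonneg _)
    · rw [neg_mul]
      exact neg_nonpos.2 (mul_self_nonneg _)
    · rw [neg_mul_neg, show (j : ℕ) = k - 1 by omega, mul_comm]
      exact hk (by omega) (by omega)

lemma mutationReach_pathMat_update_of_eq_neg_one {n : ℕ} (ε : ℕ → ℤ) (p : ℕ)
    (hp : ε p = -1) (hright : ∀ i, p < i → i + 1 < n → ε i = 1) :
    MutationReach (pathMat n ε) (pathMat n (Function.update ε p 1)) := by
  induction hd : n - p using Nat.strong_induction_on generalizing ε p with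
  | _ d ih =>
  by_cases hpn : p + 1 < n
  · set ε' := Function.update (Function.update ε p 1) (p + 1) (-1)
    have hmut : mutateMat (pathMat n ε) ⟨p + 1, hpn⟩ = pathMat n ε' := by
      rw [mutateMat_pathMat]
      · refine pathMat_congr fun i hi => ?_
        simp only [ε', Function.update_apply]
        split_ifs <;> first | omega | simp_all
      · intro _ hp2
        rw [Fin.val_mk] at hp2 ⊢
        rw [Nat.add_sub_cancel, hp, hright _ (by omega) hp2]
        norm_num
    have hnext := ih (n - (p + 1)) (by omega) ε' (p + 1) (by simp [ε'])
      (fun i hi hin => by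
        simp only [ε']
        rw [Function.update_of_ne (by omega), Function.update_of_ne (by omega)]
        exact hright i (by omega) hin) rfl
    have hend :
        pathMat n (Function.update ε' (p + 1) 1) = pathMat n (Function.update ε p 1) := by
      refine pathMat_congr fun i hi => ?_
      simp only [ε', Function.update_apply]
      split_ifs <;> first | omega | simp_all
    exact .head ⟨_, hmut.symm⟩ (hend ▸ hnext)
  · rw [pathMat_congr (ε' := Function.update ε p 1) fun i hi =>
      (Function.update_of_ne (by omega) _ _).symm]

lemma mutationReach_pathMat_one {n : ℕ} (ε : ℕ → ℤ)
    (hε : ∀ i, i + 1 < n → ε i = 1 ∨ ε i = -1) :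
    MutationReach (pathMat n ε) (pathMat n 1) := by
  suffices h : ∀ m (ε : ℕ → ℤ), (∀ i, i + 1 < n → ε i = 1 ∨ ε i = -1) →
      (∀ i, m ≤ i → i + 1 < n → ε i = 1) →
      MutationReach (pathMat n ε) (pathMat n 1) from
    h n ε hε fun i hi hin => by omega
  intro m
  induction m with
  | zero =>
    intro ε _ hright
    rw [pathMat_congr fun i hi => hright i i.zero_le hi]
    rfl
  | succ m ih =>
    intro ε hε hright
    by_cases hm : m + 1 < n ∧ ε m = -1
    · refine (mutationReach_pathMat_update_of_eq_neg_one ε m hm.2 hright).trans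
        (ih _ (fun i hi => ?_) fun i hi hin => ?_)
      · rcases eq_or_ne i m with rfl | him
        · simp
        · simpa [Function.update_of_ne him] using hε i hi
      · rcases eq_or_ne i m with rfl | him
        · simp
        · simpa [Function.update_of_ne him] using hright i (by omega) hin
    · refine ih ε hε fun i hi hin => ?_
      rcases eq_or_ne i m with rfl | him
      · exact (hε i hin).resolve_right fun h => hm ⟨hin, h⟩
      · exact hright i (by omega) hin

lemma altA_eq_pathMat (n : ℕ) : altA n = pathMat n (fun i => (-1) ^ i) := by
  funext i j
  simp only [altA, pathMat]
  split_ifs <;> simp_all [Nat.not_even_iff_odd]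

lemma linA_eq_pathMat (n : ℕ) : linA n = pathMat n 1 := rfl

/-- The quivers `A_n^alt` (alternating orientation of the path) and the linearly
oriented quiver `A_n` are mutation equivalent. -/
theorem altA_mutationEquiv_linA (n : ℕ) : MutationEquiv (altA n) (linA n) := by
  refine ⟨Equiv.refl _, ?_⟩
  rw [altA_eq_pathMat, linA_eq_pathMat]
  exact mutationReach_pathMat_one _ fun i _ => neg_one_pow_eq_or ℤ i
end
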